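/- arXiv:1702.01812 — 7 statements merged into one kernel-verified Lean document; each statement's English description precedes it below -/
import Mathlib

section
/- Let K ≥ 1 and, for k = 1,…,K, let n_k ≥ 1 with m_k = C(n_k,2); set M = ∑_{k=1}^K m_k, assume M ≥ 1, and let N = max_k n_k. For each k and each edge index e ∈ {1,…,m_k} let V_{k,e} be a nonempty countable set, and let X = ∏_{k=1}^K ∏_{e=1}^{m_k} V_{k,e}. For arbitrary natural parameters η_k ∈ ℝ^{d_k} and statistics s_k : ∏_{e=1}^{m_k} V_{k,e} → ℝ^{d_k}, suppose w(x) := exp(∑_{k=1}^K ⟨η_k, s_k(x_k)⟩) is summable over X with sum Z, and let p(x) = w(x)/Z be the resulting exponential-family probability mass function with local dependence. If f : X → ℝ satisfies |f(x) − f(y)| ≤ L·d(x,y) for all x,y ∈ X, where L > 0 and d is the Hamming distance on the edge coordinates, then f is bounded, its expectation E f = ∑_x p(x)·f(x) is well defined, and for every t > 0, ∑_{x : |f(x) − E f| ≥ t} p(x) ≤ 2·exp(−t²/(2·L²·M·N⁴)). -/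
/-!
The weight `w` factorises over the neighborhoods, so `p` is a product of probability weights
`q_k` on the neighborhood configurations: the neighborhoods are independent. Changing the
configuration of neighborhood `k` alone moves `f` by at most `c_k = L·C(n_k,2)`, so McDiarmid's
bounded-differences argument (Hoeffding's lemma in one neighborhood, chained by conditioning)
gives `E exp(l (f - E f)) ≤ exp(l² V / 2)` with `V = ∑ c_k² ≤ L² M N⁴`, and Chernoff's bound on
both tails gives the claim.
-/

/-- The sample space of within-neighborhood edge variables: `K` neighborhoods of
sizes `n k`, neighborhood `k` carrying `C(n k, 2)` edge variables with countable
state spaces `V k e`. -/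
abbrev Cfg0 (K : ℕ) (n : Fin K → ℕ)
    (V : (k : Fin K) → Fin (Nat.choose (n k) 2) → Type) : Type :=
  (k : Fin K) → (e : Fin (Nat.choose (n k) 2)) → V k e

open Finset Real

structure IsProbWeights {α : Type*} (q : α → ℝ) : Prop where
  nonneg : ∀ a, 0 ≤ q a
  hasSum : HasSum q 1

lemma exists_abs_le_of_abs_sub_le {α : Type*} [Nonempty α] {g : α → ℝ} {B : ℝ}
    (h : ∀ a b, |g a - g b| ≤ B) : ∃ C, ∀ a, |g a| ≤ C := by
  obtain ⟨a₀⟩ := ‹Nonempty α›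
  exact ⟨|g a₀| + B, fun a => by linarith [abs_sub_abs_le_abs_sub (g a) (g a₀), h a a₀]⟩

lemma abs_exp_mul_le {l v B : ℝ} (hv : |v| ≤ B) : |exp (l * v)| ≤ exp (|l| * B) := by
  rw [abs_of_pos (exp_pos _)]
  refine exp_le_exp.2 <| (le_abs_self _).trans ?_
  rw [abs_mul]
  exact mul_le_mul_of_nonneg_left hv (abs_nonneg l)

-- At `c = 0` the quotient is Lean's `x / 0 = 0`; the bound survives because then `d = 0`.
lemma exp_mul_le_cosh_add_mul_sinh_div {c d : ℝ} (hd : |d| ≤ c) (l : ℝ) :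
    exp (l * d) ≤ cosh (l * c) + d * (sinh (l * c) / c) := by
  rcases (abs_nonneg d).trans hd |>.eq_or_lt with rfl | hc
  · simp [abs_nonpos_iff.1 hd]
  obtain ⟨hd₁, hd₂⟩ := abs_le.1 hd
  have hc₀ : c ≠ 0 := hc.ne'
  have hA : 0 ≤ (d + c) / (2 * c) := by apply div_nonneg <;> linarith
  have hB : 0 ≤ (c - d) / (2 * c) := by apply div_nonneg <;> linarith
  have hAB : (d + c) / (2 * c) + (c - d) / (2 * c) = 1 := by field_simp; ring
  have key := convexOn_exp.2 (Set.mem_univ (l * c)) (Set.mem_univ (-(l * c))) hA hB hAB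
  have harg : ((d + c) / (2 * c)) • (l * c) + ((c - d) / (2 * c)) • (-(l * c)) = l * d := by
    simp only [smul_eq_mul]; field_simp; ring
  rw [harg] at key
  refine key.trans_eq ?_
  rw [cosh_eq, sinh_eq]
  simp only [smul_eq_mul]
  field_simp
  ring

namespace IsProbWeights

variable {α : Type*} {q : α → ℝ}

lemma summable (hq : IsProbWeights q) : Summable q := hq.hasSum.summable

lemma tsum_eq_one (hq : IsProbWeights q) : ∑' a, q a = 1 := hq.hasSum.tsum_eq

lemma nonempty (hq : IsProbWeights q) : Nonempty α := by
  by_contra h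
  have : IsEmpty α := not_nonempty_iff.1 h
  simpa using hq.tsum_eq_one

lemma tsum_mul_const (hq : IsProbWeights q) (b : ℝ) : ∑' a, q a * b = b := by
  rw [tsum_mul_right, hq.tsum_eq_one, one_mul]

lemma summable_mul {g : α → ℝ} {B : ℝ} (hq : IsProbWeights q) (hg : ∀ a, |g a| ≤ B) :
    Summable fun a => q a * g a :=
  Summable.of_norm_bounded (hq.summable.mul_right B) fun a => by
    rw [Real.norm_eq_abs, abs_mul, abs_of_nonneg (hq.nonneg a)]
    exact mul_le_mul_of_nonneg_left (hg a) (hq.nonneg a)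

lemma summable_mul_exp {g : α → ℝ} {B : ℝ} (hq : IsProbWeights q) (hg : ∀ a, |g a| ≤ B)
    (l : ℝ) : Summable fun a => q a * exp (l * g a) :=
  hq.summable_mul fun a => abs_exp_mul_le (hg a)

lemma abs_tsum_mul_le {g : α → ℝ} {B : ℝ} (hq : IsProbWeights q) (hg : ∀ a, |g a| ≤ B) :
    |∑' a, q a * g a| ≤ B := by
  have hs := hq.summable_mul hg
  refine abs_le.2 ⟨?_, ?_⟩
  · calc -B = ∑' a, q a * -B := (hq.tsum_mul_const _).symm
      _ ≤ ∑' a, q a * g a := (hq.summable.mul_right _).tsum_le_tsum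
          (fun a => mul_le_mul_of_nonneg_left (neg_le_of_abs_le (hg a)) (hq.nonneg a)) hs
  · calc ∑' a, q a * g a ≤ ∑' a, q a * B := hs.tsum_le_tsum
          (fun a => mul_le_mul_of_nonneg_left (le_of_abs_le (hg a)) (hq.nonneg a))
          (hq.summable.mul_right _)
      _ = B := hq.tsum_mul_const B

lemma abs_tsum_mul_sub_tsum_mul_le {u v : α → ℝ} {B : ℝ} (hq : IsProbWeights q)
    (hu : Summable fun a => q a * u a) (hv : Summable fun a => q a * v a)
    (h : ∀ a, |u a - v a| ≤ B) : |∑' a, q a * u a - ∑' a, q a * v a| ≤ B := by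
  rw [← hu.tsum_sub hv]
  simpa only [mul_sub] using hq.abs_tsum_mul_le h

lemma abs_sub_tsum_mul_le {g : α → ℝ} {B : ℝ} (hq : IsProbWeights q)
    (hg : Summable fun a => q a * g a) (h : ∀ a b, |g a - g b| ≤ B) (a : α) :
    |g a - ∑' b, q b * g b| ≤ B := by
  conv_lhs => rw [← hq.tsum_mul_const (g a)]
  exact hq.abs_tsum_mul_sub_tsum_mul_le (hq.summable.mul_right _) hg (h a)

-- Hoeffding's lemma; `c` bounds the oscillation, not the range, hence `c² / 2` and not `c² / 8`.
lemma tsum_mul_exp_sub_tsum_le {g : α → ℝ} {c : ℝ} (hq : IsProbWeights q)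
    (h : ∀ a b, |g a - g b| ≤ c) (l : ℝ) :
    ∑' a, q a * exp (l * (g a - ∑' b, q b * g b)) ≤ exp (l ^ 2 * c ^ 2 / 2) := by
  have := hq.nonempty
  obtain ⟨C, hC⟩ := exists_abs_le_of_abs_sub_le h
  have hg := hq.summable_mul hC
  set μ := ∑' b, q b * g b
  have hd : ∀ a, |g a - μ| ≤ c := hq.abs_sub_tsum_mul_le hg h
  have hcentred : ∑' a, q a * (g a - μ) = 0 := by
    simp only [mul_sub]
    rw [hg.tsum_sub (hq.summable.mul_right μ), hq.tsum_mul_const, sub_self]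
  have hsd : Summable fun a => q a * (g a - μ) := hq.summable_mul hd
  calc ∑' a, q a * exp (l * (g a - μ))
      ≤ ∑' a, (q a * cosh (l * c) + q a * (g a - μ) * (sinh (l * c) / c)) := by
        refine (hq.summable_mul_exp hd l).tsum_le_tsum (fun a => ?_)
          ((hq.summable.mul_right _).add (hsd.mul_right _))
        rw [mul_assoc, ← mul_add]
        exact mul_le_mul_of_nonneg_left (exp_mul_le_cosh_add_mul_sinh_div (hd a) l) (hq.nonneg a)
    _ = cosh (l * c) := by
        rw [(hq.summable.mul_right _).tsum_add (hsd.mul_right _), tsum_mul_right, tsum_mul_right,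
          hcentred, hq.tsum_eq_one]
        ring
    _ ≤ exp (l ^ 2 * c ^ 2 / 2) := by
        rw [← mul_pow]; exact cosh_le_exp_half_sq _

lemma tsum_mul_exp_sub_le {g : α → ℝ} {c : ℝ} (hq : IsProbWeights q)
    (h : ∀ a b, |g a - g b| ≤ c) (l m : ℝ) :
    ∑' a, q a * exp (l * (g a - m)) ≤
      exp (l * (∑' b, q b * g b - m)) * exp (l ^ 2 * c ^ 2 / 2) := by
  have hsplit : ∀ a, q a * exp (l * (g a - m)) =
      exp (l * (∑' b, q b * g b - m)) * (q a * exp (l * (g a - ∑' b, q b * g b))) := fun a => by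
    rw [mul_left_comm, ← exp_add]; ring_nf
  rw [tsum_congr hsplit, tsum_mul_left]
  exact mul_le_mul_of_nonneg_left (hq.tsum_mul_exp_sub_tsum_le h l) (exp_pos _).le

end IsProbWeights

def prodWeight {ι : Type*} [Fintype ι] {Y : ι → Type*} (q : ∀ i, Y i → ℝ) (x : ∀ i, Y i) : ℝ :=
  ∏ i, q i (x i)

lemma prodWeight_cons {K : ℕ} {Y : Fin (K + 1) → Type*} (q : ∀ k, Y k → ℝ) (a : Y 0)
    (z : ∀ i : Fin K, Y i.succ) :
    prodWeight q (Fin.cons a z) = q 0 a * prodWeight (fun i : Fin K => q i.succ) z := by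
  simp only [prodWeight, Fin.prod_univ_succ, Fin.cons_zero, Fin.cons_succ]

lemma hasSum_prodWeight {K : ℕ} {Y : Fin K → Type*} {g : ∀ k, Y k → ℝ} {s : Fin K → ℝ}
    (hg₀ : ∀ k y, 0 ≤ g k y) (hg : ∀ k, HasSum (g k) (s k)) :
    HasSum (prodWeight g) (∏ k, s k) := by
  induction K with
  | zero =>
    have : prodWeight g = fun _ => 1 := funext fun x => by simp [prodWeight]
    simp [this]
  | succ K ih =>
    have hsucc := ih (fun i => hg₀ i.succ) (fun i => hg i.succ)
    have hmul := (hg 0).mul hsucc <|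
      (hg 0).summable.mul_of_nonneg hsucc.summable (hg₀ 0) fun z => prod_nonneg fun i _ => hg₀ _ _
    have hcons : prodWeight g ∘ Fin.consEquiv Y =
        fun x => g 0 x.1 * prodWeight (fun i : Fin K => g i.succ) x.2 :=
      funext fun x => prodWeight_cons g x.1 x.2
    rwa [Fin.prod_univ_succ, ← (Fin.consEquiv Y).hasSum_iff, hcons]

lemma IsProbWeights.prodWeight {K : ℕ} {Y : Fin K → Type*} {q : ∀ k, Y k → ℝ}
    (hq : ∀ k, IsProbWeights (q k)) : IsProbWeights (prodWeight q) where
  nonneg x := prod_nonneg fun k _ => (hq k).nonneg (x k)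
  hasSum := by
    simpa using hasSum_prodWeight (fun k => (hq k).nonneg) fun k => (hq k).hasSum

lemma tsum_prodWeight_mul_eq_tsum_tsum_cons {K : ℕ} {Y : Fin (K + 1) → Type*}
    {q : ∀ k, Y k → ℝ} (hq : ∀ k, IsProbWeights (q k)) {h : (∀ k, Y k) → ℝ} {B : ℝ}
    (hh : ∀ x, |h x| ≤ B) :
    ∑' x, prodWeight q x * h x =
      ∑' z, prodWeight (fun i : Fin K => q i.succ) z * ∑' a, q 0 a * h (Fin.cons a z) := by
  let e := (Equiv.prodComm _ _).trans (Fin.consEquiv Y)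
  have hs : Summable fun r => prodWeight q (e r) * h (e r) :=
    ((IsProbWeights.prodWeight hq).summable_mul hh).comp_injective e.injective
  rw [← e.tsum_eq, hs.tsum_prod]
  refine tsum_congr fun z => ?_
  rw [← tsum_mul_left]
  refine tsum_congr fun a => ?_
  change prodWeight q (Fin.cons a z) * h (Fin.cons a z) = _
  rw [prodWeight_cons]
  ring

lemma abs_sub_le_sum_of_abs_sub_update_le {ι : Type*} [Fintype ι] [DecidableEq ι]
    {Y : ι → Type*} {f : (∀ i, Y i) → ℝ} {c : ι → ℝ}
    (hf : ∀ x i y, |f x - f (Function.update x i y)| ≤ c i) (x y : ∀ i, Y i) :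
    |f x - f y| ≤ ∑ i, c i := by
  suffices ∀ s : Finset ι, |f x - f (s.piecewise y x)| ≤ ∑ i ∈ s, c i by
    simpa using this univ
  intro s
  induction s using Finset.induction_on with
  | empty => simp
  | insert i s hi ih =>
    rw [Finset.piecewise_insert, sum_insert hi]
    calc _ ≤ |f x - f (s.piecewise y x)| +
          |f (s.piecewise y x) - f (Function.update (s.piecewise y x) i (y i))| :=
          abs_sub_le _ _ _
      _ ≤ ∑ j ∈ s, c j + c i := add_le_add ih (hf _ i _)
      _ = c i + ∑ j ∈ s, c j := add_comm _ _

-- McDiarmid's argument: condition on the first coordinate, apply Hoeffding's lemma there and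
-- induct on the remaining ones.
theorem tsum_prodWeight_mul_exp_le {K : ℕ} {Y : Fin K → Type*} {q : ∀ k, Y k → ℝ}
    (hq : ∀ k, IsProbWeights (q k)) {f : (∀ k, Y k) → ℝ} {c : Fin K → ℝ}
    (hf : ∀ x k y, |f x - f (Function.update x k y)| ≤ c k) (l : ℝ) :
    ∑' x, prodWeight q x * exp (l * (f x - ∑' z, prodWeight q z * f z)) ≤
      exp (l ^ 2 * (∑ k, c k ^ 2) / 2) := by
  induction K with
  | zero => simp [prodWeight]
  | succ K ih =>
    set P' : (∀ i : Fin K, Y i.succ) → ℝ := prodWeight fun i => q i.succ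
    have hP' : IsProbWeights P' := IsProbWeights.prodWeight fun i => hq i.succ
    have := (IsProbWeights.prodWeight hq).nonempty
    obtain ⟨C, hC⟩ := exists_abs_le_of_abs_sub_le (abs_sub_le_sum_of_abs_sub_update_le hf)
    have hC₀ : ∀ z (a : Y 0), |f (Fin.cons a z)| ≤ C := fun _ _ => hC _
    set F : (∀ i : Fin K, Y i.succ) → ℝ := fun z => ∑' a, q 0 a * f (Fin.cons a z)
    have hFupd : ∀ z i y, |F z - F (Function.update z i y)| ≤ c i.succ := fun z i y =>
      (hq 0).abs_tsum_mul_sub_tsum_mul_le ((hq 0).summable_mul (hC₀ _))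
        ((hq 0).summable_mul (hC₀ _)) fun a => by rw [Fin.cons_update]; exact hf _ _ _
    have hμ : ∑' x, prodWeight q x * f x = ∑' z, P' z * F z :=
      tsum_prodWeight_mul_eq_tsum_tsum_cons hq hC
    set μ := ∑' x, prodWeight q x * f x
    have hfμ : ∀ x, |f x - μ| ≤ C + |μ| := fun x => (abs_sub _ _).trans (by linarith [hC x])
    have hFμ : ∀ z, |F z - μ| ≤ C + |μ| := fun z =>
      (abs_sub _ _).trans (by linarith [(hq 0).abs_tsum_mul_le (hC₀ z)])
    have hinner : ∀ z, ∑' a, q 0 a * exp (l * (f (Fin.cons a z) - μ)) ≤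
        exp (l * (F z - μ)) * exp (l ^ 2 * c 0 ^ 2 / 2) := fun z =>
      (hq 0).tsum_mul_exp_sub_le (fun a b => by rw [← Fin.update_cons_zero a z b]; exact hf _ 0 b)
        l μ
    have hrhs := (hP'.summable_mul_exp hFμ l).mul_right (exp (l ^ 2 * c 0 ^ 2 / 2))
    have hle : ∀ z, P' z * ∑' a, q 0 a * exp (l * (f (Fin.cons a z) - μ)) ≤
        P' z * exp (l * (F z - μ)) * exp (l ^ 2 * c 0 ^ 2 / 2) := fun z => by
      rw [mul_assoc]
      exact mul_le_mul_of_nonneg_left (hinner z) (hP'.nonneg z)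
    have hih := ih (fun i => hq i.succ) hFupd
    rw [← hμ] at hih
    calc ∑' x, prodWeight q x * exp (l * (f x - μ))
        = ∑' z, P' z * ∑' a, q 0 a * exp (l * (f (Fin.cons a z) - μ)) :=
          tsum_prodWeight_mul_eq_tsum_tsum_cons hq fun x => abs_exp_mul_le (hfμ x)
      _ ≤ ∑' z, P' z * exp (l * (F z - μ)) * exp (l ^ 2 * c 0 ^ 2 / 2) :=
          (hrhs.of_nonneg_of_le (fun z => mul_nonneg (hP'.nonneg z)
            (tsum_nonneg fun a => mul_nonneg ((hq 0).nonneg a) (exp_pos _).le)) hle).tsum_le_tsum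
            hle hrhs
      _ = (∑' z, P' z * exp (l * (F z - μ))) * exp (l ^ 2 * c 0 ^ 2 / 2) := tsum_mul_right
      _ ≤ exp (l ^ 2 * (∑ i : Fin K, c i.succ ^ 2) / 2) * exp (l ^ 2 * c 0 ^ 2 / 2) := by
          gcongr
      _ = exp (l ^ 2 * (∑ k, c k ^ 2) / 2) := by
          rw [← exp_add, Fin.sum_univ_succ]; ring_nf

namespace IsProbWeights

variable {α : Type*} {q g : α → ℝ} {V t : ℝ}

-- Chernoff's bound, with the exponent optimised at `l = t / V`.
lemma tsum_indicator_le_exp (hq : IsProbWeights q) (hV : 0 ≤ V) (ht : 0 ≤ t)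
    (hs : ∀ l, Summable fun a => q a * exp (l * g a))
    (hmgf : ∀ l, ∑' a, q a * exp (l * g a) ≤ exp (l ^ 2 * V / 2)) :
    ∑' a, {a | t ≤ g a}.indicator q a ≤ exp (-t ^ 2 / (2 * V)) := by
  have hind : Summable ({a | t ≤ g a}.indicator q) := hq.summable.indicator _
  rcases hV.eq_or_lt with rfl | hV
  · calc ∑' a, {a | t ≤ g a}.indicator q a ≤ ∑' a, q a :=
          hind.tsum_le_tsum (Set.indicator_le_self' fun a _ => hq.nonneg a) hq.summable
      _ = exp (-t ^ 2 / (2 * 0)) := by simp [hq.tsum_eq_one]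
  set l := t / V
  have hpt : ∀ a, {a | t ≤ g a}.indicator q a ≤ q a * exp (l * g a) * exp (-(l * t)) := by
    intro a
    rw [mul_assoc, ← exp_add, Set.indicator_apply]
    split_ifs with ha
    · refine le_mul_of_one_le_right (hq.nonneg a) (one_le_exp ?_)
      linarith [mul_nonneg (div_nonneg ht hV.le) (sub_nonneg.2 (show t ≤ g a from ha))]
    · exact mul_nonneg (hq.nonneg a) (exp_pos _).le
  calc ∑' a, {a | t ≤ g a}.indicator q a ≤ ∑' a, q a * exp (l * g a) * exp (-(l * t)) :=
        hind.tsum_le_tsum hpt ((hs l).mul_right _)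
    _ = (∑' a, q a * exp (l * g a)) * exp (-(l * t)) := tsum_mul_right
    _ ≤ exp (l ^ 2 * V / 2) * exp (-(l * t)) := by gcongr; exact hmgf l
    _ = exp (-t ^ 2 / (2 * V)) := by
        rw [← exp_add]; congr 1; simp only [l]; field_simp; ring

lemma tsum_subtype_le_two_mul_exp (hq : IsProbWeights q) (hV : 0 ≤ V) (ht : 0 ≤ t)
    (hs : ∀ l, Summable fun a => q a * exp (l * g a))
    (hmgf : ∀ l, ∑' a, q a * exp (l * g a) ≤ exp (l ^ 2 * V / 2)) :
    ∑' a : {a // t ≤ |g a|}, q a ≤ 2 * exp (-t ^ 2 / (2 * V)) := by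
  have hs' : ∀ l, Summable fun a => q a * exp (l * -g a) := fun l => by
    simpa only [mul_neg, neg_mul] using hs (-l)
  have hmgf' : ∀ l, ∑' a, q a * exp (l * -g a) ≤ exp (l ^ 2 * V / 2) := fun l => by
    simpa only [mul_neg, neg_mul, neg_sq] using hmgf (-l)
  have hpt : ∀ a, {a | t ≤ |g a|}.indicator q a ≤
      {a | t ≤ g a}.indicator q a + {a | t ≤ -g a}.indicator q a := by
    intro a
    have := hq.nonneg a
    simp only [Set.indicator_apply, Set.mem_ofPred_eq]
    split_ifs <;> rcases abs_cases (g a) with ⟨h, _⟩ | ⟨h, _⟩ <;> linarith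
  calc ∑' a : {a // t ≤ |g a|}, q a = ∑' a, {a | t ≤ |g a|}.indicator q a :=
        tsum_subtype {a | t ≤ |g a|} q
    _ ≤ ∑' a, ({a | t ≤ g a}.indicator q a + {a | t ≤ -g a}.indicator q a) :=
        (hq.summable.indicator _).tsum_le_tsum hpt
          ((hq.summable.indicator _).add (hq.summable.indicator _))
    _ = ∑' a, {a | t ≤ g a}.indicator q a + ∑' a, {a | t ≤ -g a}.indicator q a :=
        (hq.summable.indicator _).tsum_add (hq.summable.indicator _)
    _ ≤ 2 * exp (-t ^ 2 / (2 * V)) := by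
        linarith [hq.tsum_indicator_le_exp hV ht hs hmgf, hq.tsum_indicator_le_exp hV ht hs' hmgf']

end IsProbWeights

lemma summable_of_summable_prodWeight {ι : Type*} [Fintype ι] {Y : ι → Type*}
    [∀ i, Nonempty (Y i)] {g : ∀ i, Y i → ℝ} (hg : ∀ i y, 0 < g i y)
    (hs : Summable (prodWeight g)) (i : ι) : Summable (g i) := by
  classical
  let x₀ : ∀ j, Y j := fun j => Classical.arbitrary _
  have hC : 0 < ∏ j ∈ univ.erase i, g j (x₀ j) := prod_pos fun j _ => hg j _
  have hslice : ∀ y, prodWeight g (Function.update x₀ i y) =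
      g i y * ∏ j ∈ univ.erase i, g j (x₀ j) := fun y => by
    rw [prodWeight, ← mul_prod_erase univ _ (mem_univ i), Function.update_self]
    congr 1
    exact prod_congr rfl fun j hj => by rw [Function.update_of_ne (ne_of_mem_erase hj)]
  refine (summable_mul_right_iff hC.ne').1 ?_
  simpa only [Function.comp_def, hslice] using hs.comp_injective (Function.update_injective x₀ i)

lemma exists_isProbWeights_prodWeight_eq_div {K : ℕ} {Y : Fin K → Type*}
    [∀ k, Nonempty (Y k)] {g : ∀ k, Y k → ℝ} (hg : ∀ k y, 0 < g k y)
    (hs : Summable (prodWeight g)) :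
    ∃ q : ∀ k, Y k → ℝ, (∀ k, IsProbWeights (q k)) ∧
      ∀ x, prodWeight g x / ∑' x, prodWeight g x = prodWeight q x := by
  have hgs := summable_of_summable_prodWeight hg hs
  have hZ : ∀ k, 0 < ∑' y, g k y := fun k =>
    (hgs k).tsum_pos (fun y => (hg k y).le) (Classical.arbitrary _) (hg k _)
  refine ⟨fun k y => g k y / ∑' y, g k y,
    fun k => ⟨fun y => div_nonneg (hg k y).le (hZ k).le, ?_⟩, fun x => ?_⟩
  · simpa [div_self (hZ k).ne'] using (hgs k).hasSum.div_const (∑' y, g k y)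
  · rw [(hasSum_prodWeight (fun k y => (hg k y).le) fun k => (hgs k).hasSum).tsum_eq,
      prodWeight, prodWeight, prod_div_distrib]

lemma abs_sub_update_le_of_hamming {K : ℕ} {n : Fin K → ℕ}
    {V : (k : Fin K) → Fin (Nat.choose (n k) 2) → Type} [∀ k e, DecidableEq (V k e)]
    {f : Cfg0 K n V → ℝ} {L : ℝ} (hL : 0 ≤ L)
    (hf : ∀ x y : Cfg0 K n V,
      |f x - f y| ≤ L * ∑ k, (((Finset.univ.filter (fun e => x k e ≠ y k e)).card : ℝ)))
    (x : Cfg0 K n V) (k : Fin K) (y : ∀ e, V k e) :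
    |f x - f (Function.update x k y)| ≤ L * (n k).choose 2 := by
  refine (hf _ _).trans (mul_le_mul_of_nonneg_left ?_ hL)
  rw [sum_eq_single k (fun j _ hj => by simp [Function.update_of_ne hj]) (by simp)]
  exact_mod_cast (card_filter_le _ _).trans_eq (by simp)

lemma sum_sq_mul_choose_two_le {K : ℕ} (n : Fin K → ℕ) {N : ℕ} (hN : ∀ k, n k ≤ N) (L : ℝ) :
    ∑ k, (L * (n k).choose 2) ^ 2 ≤ L ^ 2 * (∑ k, ((n k).choose 2 : ℝ)) * N ^ 4 := by
  rw [mul_sum, sum_mul]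
  gcongr with k
  have hm : (n k).choose 2 ≤ N ^ 4 :=
    calc (n k).choose 2 ≤ n k ^ 2 := Nat.choose_le_pow _ _
      _ ≤ N ^ 2 := Nat.pow_le_pow_left (hN k) 2
      _ ≤ N ^ 2 * N ^ 2 := Nat.le_mul_self _
      _ = N ^ 4 := by ring
  calc (L * (n k).choose 2) ^ 2 = L ^ 2 * (n k).choose 2 * (n k).choose 2 := by ring
    _ ≤ L ^ 2 * (n k).choose 2 * N ^ 4 := by gcongr; exact_mod_cast hm

theorem statement0_general
    (K : ℕ)
    (n : Fin K → ℕ)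
    (N : ℕ) (hNub : ∀ k, n k ≤ N)
    (V : (k : Fin K) → Fin (Nat.choose (n k) 2) → Type)
    [∀ k e, Nonempty (V k e)]
    [∀ k e, DecidableEq (V k e)]
    (dk : Fin K → ℕ)
    (η : (k : Fin K) → Fin (dk k) → ℝ)
    (s : (k : Fin K) → ((e : Fin (Nat.choose (n k) 2)) → V k e) → Fin (dk k) → ℝ)
    (w : Cfg0 K n V → ℝ)
    (hw : ∀ x, w x = Real.exp (∑ k, ∑ i, η k i * s k (x k) i))
    (hwsum : Summable w)
    (Z : ℝ) (hZ : Z = ∑' x, w x)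
    (p : Cfg0 K n V → ℝ) (hp : ∀ x, p x = w x / Z)
    (f : Cfg0 K n V → ℝ)
    (L : ℝ) (hL : 0 < L)
    (hf : ∀ x y : Cfg0 K n V,
      |f x - f y| ≤
        L * ∑ k, (((Finset.univ.filter (fun e => x k e ≠ y k e)).card : ℝ))) :
    (∃ Bd : ℝ, ∀ x, |f x| ≤ Bd) ∧
    Summable (fun x => p x * f x) ∧
    ∀ t : ℝ, 0 < t →
      (∑' x : {x : Cfg0 K n V // t ≤ |f x - ∑' y, p y * f y|}, p x.1) ≤
        2 * Real.exp (-(t ^ 2) /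
          (2 * L ^ 2 * (∑ k, ((Nat.choose (n k) 2 : ℝ))) * (N : ℝ) ^ 4)) := by
  obtain rfl : w = prodWeight fun k y => exp (∑ i, η k i * s k y i) :=
    funext fun x => by rw [hw, prodWeight, exp_sum]
  obtain ⟨q, hq, hpq⟩ := exists_isProbWeights_prodWeight_eq_div (fun k y => exp_pos _) hwsum
  obtain rfl : p = prodWeight q := funext fun x => by rw [hp, hZ, hpq]
  have hP := IsProbWeights.prodWeight hq
  have hupd := abs_sub_update_le_of_hamming hL.le hf
  obtain ⟨B, hB⟩ := exists_abs_le_of_abs_sub_le (abs_sub_le_sum_of_abs_sub_update_le hupd)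
  refine ⟨⟨B, hB⟩, hP.summable_mul hB, fun t ht => ?_⟩
  set μ := ∑' y, prodWeight q y * f y
  have hfμ : ∀ x, |f x - μ| ≤ B + |μ| := fun x => (abs_sub _ _).trans (by linarith [hB x])
  have hV := sum_sq_mul_choose_two_le n hNub L
  refine (hP.tsum_subtype_le_two_mul_exp (V := L ^ 2 * (∑ k, ((n k).choose 2 : ℝ)) * N ^ 4)
    (by positivity) ht.le (hP.summable_mul_exp hfμ)
    fun l => (tsum_prodWeight_mul_exp_le hq hupd l).trans (by gcongr)).trans_eq ?_
  rw [mul_assoc 2, mul_assoc 2]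

/-- Proposition 1 of the paper, with the unspecified constant instantiated as `2`:
concentration of Hamming–Lipschitz functions of a random graph drawn from an
exponential-family pmf with local dependence on countable state spaces.  If
`|f(x) − f(y)| ≤ L·d(x,y)` for the Hamming distance `d`, then `f` is bounded, its
expectation is well defined, and
`P(|f(X) − E f| ≥ t) ≤ 2·exp(−t²/(2·L²·M·N⁴))` for every `t > 0`, where
`M = ∑_k C(n_k,2)` and `N = max_k n_k`. -/
theorem statement0
    (K : ℕ) (hK : 1 ≤ K)
    (n : Fin K → ℕ) (hn : ∀ k, 1 ≤ n k)
    (hM : 1 ≤ ∑ k, Nat.choose (n k) 2)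
    (N : ℕ) (hNub : ∀ k, n k ≤ N) (hNmem : ∃ k, n k = N)
    (V : (k : Fin K) → Fin (Nat.choose (n k) 2) → Type)
    [∀ k e, Countable (V k e)] [∀ k e, Nonempty (V k e)]
    [∀ k e, DecidableEq (V k e)]
    (dk : Fin K → ℕ)
    (η : (k : Fin K) → Fin (dk k) → ℝ)
    (s : (k : Fin K) → ((e : Fin (Nat.choose (n k) 2)) → V k e) → Fin (dk k) → ℝ)
    (w : Cfg0 K n V → ℝ)
    (hw : ∀ x, w x = Real.exp (∑ k, ∑ i, η k i * s k (x k) i))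
    (hwsum : Summable w)
    (Z : ℝ) (hZ : Z = ∑' x, w x)
    (p : Cfg0 K n V → ℝ) (hp : ∀ x, p x = w x / Z)
    (f : Cfg0 K n V → ℝ)
    (L : ℝ) (hL : 0 < L)
    (hf : ∀ x y : Cfg0 K n V,
      |f x - f y| ≤
        L * ∑ k, (((Finset.univ.filter (fun e => x k e ≠ y k e)).card : ℝ))) :
    (∃ Bd : ℝ, ∀ x, |f x| ≤ Bd) ∧
    Summable (fun x => p x * f x) ∧
    ∀ t : ℝ, 0 < t →
      (∑' x : {x : Cfg0 K n V // t ≤ |f x - ∑' y, p y * f y|}, p x.1) ≤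
        2 * Real.exp (-(t ^ 2) /
          (2 * L ^ 2 * (∑ k, ((Nat.choose (n k) 2 : ℝ))) * (N : ℝ) ^ 4)) :=
  statement0_general K n N hNub V dk η s w hw hwsum Z hZ p hp f L hL hf
end

section
/- Let K ≥ 1 be the number of neighborhoods with sizes n_1,…,n_K ≥ 1, m_k = C(n_k,2), M = ∑_{k=1}^K m_k ≥ 1, N = max_k n_k. Let X = ∏_{k=1}^K {0,1}^{m_k} (binary within-neighborhood edge variables) and let p be any exponential-family pmf with local dependence on X, i.e. p(x) = exp(∑_{k=1}^K ⟨η_k, s_k(x_k)⟩)/Z with arbitrary η_k ∈ ℝ^{d_k}, s_k : {0,1}^{m_k} → ℝ^{d_k}, and Z the normalizing sum over X. Let f(x) = ∑_{k=1}^K ∑_{e=1}^{m_k} x_{k,e} be the total number of within-neighborhood edges. Suppose c ≥ 1 is a real number such that N ≤ c·n_k for every k (all neighborhoods grow at the same rate) and N ≥ 2c. Then for every ε > 0, the probability under p that |f(X) − E f(X)| ≥ ε·M is at most 2·exp(−ε²·K/(8·c²·N²)); equivalently, |f(X) − E f(X)| < ε·M holds with probability at least 1 − 2·exp(−ε²·K/(8·c²·N²)).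 -/
open scoped BigOperators

set_option maxHeartbeats 4000000


lemma exp_le_quad {y : ℝ} (h : |y| ≤ 1) : Real.exp y ≤ 1 + y + y ^ 2 := by
  have hb := Real.exp_bound h (n := 2) (by norm_num)
  have hs : ∑ m ∈ Finset.range 2, y ^ m / m.factorial = 1 + y := by
    simp [Finset.sum_range_succ]
  rw [hs] at hb
  have h1 : Real.exp y - (1 + y) ≤ |y| ^ 2 * (3 / (2 * 2)) := by
    have := abs_le.mp hb
    simpa [Nat.factorial] using this.2
  have h2 : |y| ^ 2 = y ^ 2 := sq_abs y
  nlinarith [sq_nonneg y]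

section
variable {K : ℕ} {A : Fin K → Type} [∀ k, Fintype (A k)]

lemma sum_prod_pi (h : ∀ k, A k → ℝ) :
    ∑ x : ∀ k, A k, ∏ k, h k (x k) = ∏ k, ∑ a, h k a :=
  (Fintype.prod_sum h).symm

lemma sum_prod_pi_mul (q : ∀ k, A k → ℝ) (hq1 : ∀ k, ∑ a, q k a = 1)
    (k : Fin K) (φ : A k → ℝ) :
    ∑ x : ∀ j, A j, (∏ j, q j (x j)) * φ (x k) = ∑ a, q k a * φ a := by
  classical
  have key : ∀ x : ∀ j, A j, (∏ j, q j (x j)) * φ (x k)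
      = ∏ j, Function.update q k (fun a => q k a * φ a) j (x j) := by
    intro x
    rw [← Finset.mul_prod_erase Finset.univ
        (fun j => Function.update q k (fun a => q k a * φ a) j (x j)) (Finset.mem_univ k),
        ← Finset.mul_prod_erase Finset.univ (fun j => q j (x j)) (Finset.mem_univ k)]
    have h1 : ∀ j ∈ Finset.univ.erase k,
        Function.update q k (fun a => q k a * φ a) j (x j) = q j (x j) := by
      intro j hj
      rw [Function.update_of_ne (Finset.ne_of_mem_erase hj)]
    rw [Finset.prod_congr rfl h1, Function.update_self]
    ring
  calc ∑ x : ∀ j, A j, (∏ j, q j (x j)) * φ (x k)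
      = ∑ x : ∀ j, A j, ∏ j, Function.update q k (fun a => q k a * φ a) j (x j) := by
        exact Finset.sum_congr rfl fun x _ => key x
    _ = ∏ j, ∑ a, Function.update q k (fun a => q k a * φ a) j a := sum_prod_pi _
    _ = ∑ a, q k a * φ a := by
        rw [Finset.prod_eq_single_of_mem k (Finset.mem_univ k)]
        · rw [Function.update_self]
        · intro j _ hjk
          rw [Function.update_of_ne hjk]
          exact hq1 j

end

lemma mgf_le {α : Type} [Fintype α] (q : α → ℝ) (hq0 : ∀ a, 0 ≤ q a)
    (hq1 : ∑ a, q a = 1) (G : α → ℝ) (m : ℝ) (hm : 0 ≤ m)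
    (hG : ∀ a, |G a| ≤ m) (hG0 : ∑ a, q a * G a = 0)
    (l : ℝ) (hl : 0 ≤ l) (hlm : l * m ≤ 1) :
    ∑ a, q a * Real.exp (l * G a) ≤ Real.exp (l ^ 2 * m ^ 2) := by
  have step1 : ∑ a, q a * Real.exp (l * G a)
      ≤ ∑ a, (q a + l * (q a * G a) + l ^ 2 * (q a * G a ^ 2)) := by
    apply Finset.sum_le_sum
    intro a _
    have habs : |l * G a| ≤ 1 := by
      rw [abs_mul, abs_of_nonneg hl]
      calc l * |G a| ≤ l * m := by
            exact mul_le_mul_of_nonneg_left (hG a) hl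
        _ ≤ 1 := hlm
    have := exp_le_quad habs
    have h2 : q a * Real.exp (l * G a) ≤ q a * (1 + l * G a + (l * G a) ^ 2) :=
      mul_le_mul_of_nonneg_left this (hq0 a)
    calc q a * Real.exp (l * G a) ≤ q a * (1 + l * G a + (l * G a) ^ 2) := h2
      _ = q a + l * (q a * G a) + l ^ 2 * (q a * G a ^ 2) := by ring
  have step2 : ∑ a, (q a + l * (q a * G a) + l ^ 2 * (q a * G a ^ 2))
      = 1 + l ^ 2 * ∑ a, q a * G a ^ 2 := by
    rw [Finset.sum_add_distrib, Finset.sum_add_distrib, ← Finset.mul_sum, ← Finset.mul_sum,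
      hq1, hG0, mul_zero, add_zero]
  have step3 : ∑ a, q a * G a ^ 2 ≤ m ^ 2 := by
    calc ∑ a, q a * G a ^ 2 ≤ ∑ a, q a * m ^ 2 := by
          apply Finset.sum_le_sum
          intro a _
          apply mul_le_mul_of_nonneg_left _ (hq0 a)
          calc G a ^ 2 = |G a| ^ 2 := (sq_abs _).symm
            _ ≤ m ^ 2 := by
                exact pow_le_pow_left₀ (abs_nonneg _) (hG a) 2
      _ = m ^ 2 := by rw [← Finset.sum_mul, hq1, one_mul]
  have step4 : 1 + l ^ 2 * m ^ 2 ≤ Real.exp (l ^ 2 * m ^ 2) := by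
    have := Real.add_one_le_exp (l ^ 2 * m ^ 2)
    linarith
  have : l ^ 2 * ∑ a, q a * G a ^ 2 ≤ l ^ 2 * m ^ 2 :=
    mul_le_mul_of_nonneg_left step3 (sq_nonneg l)
  linarith [step1, step2 ▸ step1]

section
variable {K : ℕ} {A : Fin K → Type} [∀ k, Fintype (A k)]

lemma chernoff (q : ∀ k, A k → ℝ) (hq0 : ∀ k a, 0 ≤ q k a)
    (hq1 : ∀ k, ∑ a, q k a = 1)
    (G : ∀ k, A k → ℝ) (m : Fin K → ℝ) (hm : ∀ k, 0 ≤ m k)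
    (hG : ∀ k a, |G k a| ≤ m k) (hG0 : ∀ k, ∑ a, q k a * G k a = 0)
    (t l : ℝ) (hl : 0 ≤ l) (hlm : ∀ k, l * m k ≤ 1) :
    ∑ x ∈ Finset.univ.filter (fun x : ∀ k, A k => t ≤ ∑ k, G k (x k)), ∏ j, q j (x j)
      ≤ Real.exp (l ^ 2 * (∑ k, (m k) ^ 2) - l * t) := by
  classical
  have hp0 : ∀ x : ∀ k, A k, 0 ≤ ∏ j, q j (x j) := fun x =>
    Finset.prod_nonneg fun j _ => hq0 j (x j)
  have step1 : ∑ x ∈ Finset.univ.filter (fun x : ∀ k, A k => t ≤ ∑ k, G k (x k)),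
        ∏ j, q j (x j)
      ≤ ∑ x : ∀ k, A k, (∏ j, q j (x j)) * Real.exp (l * ((∑ k, G k (x k)) - t)) := by
    have h1 : ∀ x ∈ Finset.univ.filter (fun x : ∀ k, A k => t ≤ ∑ k, G k (x k)),
        ∏ j, q j (x j) ≤ (∏ j, q j (x j)) * Real.exp (l * ((∑ k, G k (x k)) - t)) := by
      intro x hx
      have hxe : t ≤ ∑ k, G k (x k) := (Finset.mem_filter.mp hx).2
      have h2 : (1 : ℝ) ≤ Real.exp (l * ((∑ k, G k (x k)) - t)) :=
        Real.one_le_exp (mul_nonneg hl (by linarith))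
      nlinarith [hp0 x]
    calc ∑ x ∈ Finset.univ.filter (fun x : ∀ k, A k => t ≤ ∑ k, G k (x k)), ∏ j, q j (x j)
        ≤ ∑ x ∈ Finset.univ.filter (fun x : ∀ k, A k => t ≤ ∑ k, G k (x k)),
            (∏ j, q j (x j)) * Real.exp (l * ((∑ k, G k (x k)) - t)) :=
          Finset.sum_le_sum h1
      _ ≤ ∑ x : ∀ k, A k, (∏ j, q j (x j)) * Real.exp (l * ((∑ k, G k (x k)) - t)) :=
          Finset.sum_le_sum_of_subset_of_nonneg (Finset.filter_subset _ _)
            (fun x _ _ => mul_nonneg (hp0 x) (Real.exp_nonneg _))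
  have step2 : ∑ x : ∀ k, A k, (∏ j, q j (x j)) * Real.exp (l * ((∑ k, G k (x k)) - t))
      = Real.exp (-(l * t)) * ∏ k, ∑ a, q k a * Real.exp (l * G k a) := by
    rw [← sum_prod_pi (fun k a => q k a * Real.exp (l * G k a)), Finset.mul_sum]
    apply Finset.sum_congr rfl
    intro x _
    rw [Finset.prod_mul_distrib]
    have he : Real.exp (l * ((∑ k, G k (x k)) - t))
        = Real.exp (-(l * t)) * ∏ k, Real.exp (l * G k (x k)) := by
      rw [← Real.exp_sum, ← Real.exp_add]
      congr 1
      rw [← Finset.mul_sum]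
      ring
    rw [he]
    ring
  have step3 : ∏ k, ∑ a, q k a * Real.exp (l * G k a)
      ≤ ∏ k, Real.exp (l ^ 2 * (m k) ^ 2) := by
    apply Finset.prod_le_prod
    · intro k _
      exact Finset.sum_nonneg fun a _ => mul_nonneg (hq0 k a) (Real.exp_nonneg _)
    · intro k _
      exact mgf_le (q k) (hq0 k) (hq1 k) (G k) (m k) (hm k) (hG k) (hG0 k) l hl (hlm k)
  calc ∑ x ∈ Finset.univ.filter (fun x : ∀ k, A k => t ≤ ∑ k, G k (x k)), ∏ j, q j (x j)
      ≤ Real.exp (-(l * t)) * ∏ k, ∑ a, q k a * Real.exp (l * G k a) := by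
        rw [← step2]; exact step1
    _ ≤ Real.exp (-(l * t)) * ∏ k, Real.exp (l ^ 2 * (m k) ^ 2) := by
        exact mul_le_mul_of_nonneg_left step3 (Real.exp_nonneg _)
    _ = Real.exp (l ^ 2 * (∑ k, (m k) ^ 2) - l * t) := by
        rw [← Real.exp_sum, ← Real.exp_add, Finset.mul_sum]
        ring_nf

end


/-- The sample space of binary within-neighborhood edge variables: `K` neighborhoods
of sizes `n k`, neighborhood `k` carrying `C(n k, 2)` binary edge variables. -/
abbrev Cfg (K : ℕ) (n : Fin K → ℕ) : Type :=
  (k : Fin K) → Fin (Nat.choose (n k) 2) → Bool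

/-- Corollary 1 of the paper, with the unspecified constant made explicit:
concentration of the total number of within-neighborhood edges under an
exponential-family pmf with local dependence.  If all neighborhoods grow at the
same rate (`N ≤ c·n_k` for all `k`) and `N ≥ 2c`, then for every `ε > 0`,
`P(|f(X) − E f(X)| ≥ ε·M) ≤ 2·exp(−ε²·K/(8·c²·N²))`; equivalently
`P(|f(X) − E f(X)| < ε·M) ≥ 1 − 2·exp(−ε²·K/(8·c²·N²))`. -/
theorem statement1
    (K : ℕ) (hK : 1 ≤ K)
    (n : Fin K → ℕ) (hn : ∀ k, 1 ≤ n k)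
    (hM : 1 ≤ ∑ k, Nat.choose (n k) 2)
    (N : ℕ) (hNub : ∀ k, n k ≤ N) (hNmem : ∃ k, n k = N)
    (dk : Fin K → ℕ)
    (η : (k : Fin K) → Fin (dk k) → ℝ)
    (s : (k : Fin K) → (Fin (Nat.choose (n k) 2) → Bool) → Fin (dk k) → ℝ)
    (Z : ℝ)
    (hZ : Z = ∑ x : Cfg K n, Real.exp (∑ k, ∑ i, η k i * s k (x k) i))
    (p : Cfg K n → ℝ)
    (hp : ∀ x, p x = Real.exp (∑ k, ∑ i, η k i * s k (x k) i) / Z)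
    (f : Cfg K n → ℝ)
    (hf : ∀ x, f x = ∑ k, ∑ e, (if x k e then (1 : ℝ) else 0))
    (c : ℝ) (hc : 1 ≤ c)
    (hcn : ∀ k, (N : ℝ) ≤ c * (n k : ℝ))
    (hN2c : 2 * c ≤ (N : ℝ)) :
    ∀ ε : ℝ, 0 < ε →
      ((∑' x : {x : Cfg K n //
            ε * (∑ k, ((Nat.choose (n k) 2 : ℝ))) ≤
              |f x - ∑ y : Cfg K n, p y * f y|}, p x.1) ≤
          2 * Real.exp (-(ε ^ 2 * (K : ℝ)) / (8 * c ^ 2 * (N : ℝ) ^ 2))) ∧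
      (1 - 2 * Real.exp (-(ε ^ 2 * (K : ℝ)) / (8 * c ^ 2 * (N : ℝ) ^ 2)) ≤
        ∑' x : {x : Cfg K n //
            |f x - ∑ y : Cfg K n, p y * f y| <
              ε * (∑ k, ((Nat.choose (n k) 2 : ℝ)))}, p x.1) := by
  classical
  intro ε hε
  -- real neighborhood sizes
  have hc0 : (0:ℝ) < c := lt_of_lt_of_le one_pos hc
  have hN2 : (2:ℝ) ≤ (N:ℝ) := by linarith
  have hN0 : (0:ℝ) < (N:ℝ) := by linarith
  have hKpos : (0:ℝ) < (K:ℝ) := by exact_mod_cast hK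
  set Nr : ℝ := (N : ℝ) with hNr
  set mr : Fin K → ℝ := fun k => ((Nat.choose (n k) 2 : ℝ)) with hmrdef
  have hmcast : ∀ k, mr k = (n k : ℝ) * ((n k : ℝ) - 1) / 2 := by
    intro k
    show ((Nat.choose (n k) 2 : ℝ)) = _
    exact Nat.cast_choose_two (K := ℝ) (n k)
  have hn2 : ∀ k, (2:ℝ) ≤ (n k : ℝ) := by
    intro k
    have h1 := hcn k
    nlinarith [hn k, hc0]
  have hmlb : ∀ k, Nr ^ 2 / (4 * c ^ 2) ≤ mr k := by
    intro k
    rw [hmcast k, div_le_div_iff₀ (by positivity) (by norm_num)]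
    have h1 := hcn k
    have h2 := hn2 k
    nlinarith [mul_le_mul h1 h1 hN0.le (by positivity : (0:ℝ) ≤ c * (n k : ℝ))]
  have hmub : ∀ k, mr k ≤ Nr ^ 2 / 2 := by
    intro k
    rw [hmcast k, div_le_div_iff₀ (by norm_num) (by norm_num)]
    have h1 : (n k : ℝ) ≤ Nr := by rw [hNr]; exact_mod_cast hNub k
    have h2 := hn2 k
    nlinarith
  have hm0 : ∀ k, 0 < mr k := fun k => lt_of_lt_of_le (by positivity) (hmlb k)
  set Mr : ℝ := ∑ k, mr k with hMrdef
  have hMlb : (K:ℝ) * (Nr ^ 2 / (4 * c ^ 2)) ≤ Mr := by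
    rw [hMrdef]
    calc (K:ℝ) * (Nr ^ 2 / (4 * c ^ 2)) = ∑ _k : Fin K, Nr ^ 2 / (4 * c ^ 2) := by
          rw [Finset.sum_const, Finset.card_univ, Fintype.card_fin, nsmul_eq_mul]
      _ ≤ ∑ k, mr k := Finset.sum_le_sum fun k _ => hmlb k
  have hM0 : 0 < Mr :=
    lt_of_lt_of_le (by positivity) hMlb
  -- probability setup
  set w : (k : Fin K) → (Fin (Nat.choose (n k) 2) → Bool) → ℝ :=
    fun k a => Real.exp (∑ i, η k i * s k a i) with hwdef
  set Zk : Fin K → ℝ := fun k => ∑ a, w k a with hZkdef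
  have hZkpos : ∀ k, 0 < Zk k := fun k =>
    Finset.sum_pos (fun a _ => Real.exp_pos _) Finset.univ_nonempty
  set q : (k : Fin K) → (Fin (Nat.choose (n k) 2) → Bool) → ℝ :=
    fun k a => w k a / Zk k with hqdef
  have hq0 : ∀ k a, 0 ≤ q k a := fun k a =>
    div_nonneg (Real.exp_pos _).le (hZkpos k).le
  have hq1 : ∀ k, ∑ a, q k a = 1 := by
    intro k
    rw [hqdef]
    rw [← Finset.sum_div, div_self (hZkpos k).ne']
  have hZprod : Z = ∏ k, Zk k := by
    rw [hZ, hZkdef]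
    calc ∑ x : Cfg K n, Real.exp (∑ k, ∑ i, η k i * s k (x k) i)
        = ∑ x : Cfg K n, ∏ k, w k (x k) := by
          apply Finset.sum_congr rfl
          intro x _
          rw [Real.exp_sum]
      _ = ∏ k, ∑ a, w k a := sum_prod_pi w
  have hpq : ∀ x : Cfg K n, p x = ∏ k, q k (x k) := by
    intro x
    rw [hp, hZprod, Real.exp_sum, ← Finset.prod_div_distrib]
  have hp0 : ∀ x : Cfg K n, 0 ≤ p x := by
    intro x
    rw [hpq]
    exact Finset.prod_nonneg fun k _ => hq0 k (x k)
  -- edge counts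
  set g : (k : Fin K) → (Fin (Nat.choose (n k) 2) → Bool) → ℝ :=
    fun k a => ∑ e, (if a e then (1:ℝ) else 0) with hgdef
  have hg0 : ∀ k a, 0 ≤ g k a := fun k a =>
    Finset.sum_nonneg fun e _ => by positivity
  have hgle : ∀ k a, g k a ≤ mr k := by
    intro k a
    rw [hgdef, hmrdef]
    calc ∑ e, (if a e then (1:ℝ) else 0) ≤ ∑ _e : Fin (Nat.choose (n k) 2), (1:ℝ) := by
          apply Finset.sum_le_sum
          intro e _
          split <;> norm_num
      _ = ((Nat.choose (n k) 2 : ℝ)) := by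
          rw [Finset.sum_const, Finset.card_univ, Fintype.card_fin, nsmul_eq_mul, mul_one]
  set μ : Fin K → ℝ := fun k => ∑ a, q k a * g k a with hμdef
  have hμ0 : ∀ k, 0 ≤ μ k := fun k =>
    Finset.sum_nonneg fun a _ => mul_nonneg (hq0 k a) (hg0 k a)
  have hμle : ∀ k, μ k ≤ mr k := by
    intro k
    rw [hμdef]
    calc ∑ a, q k a * g k a ≤ ∑ a, q k a * mr k :=
          Finset.sum_le_sum fun a _ => mul_le_mul_of_nonneg_left (hgle k a) (hq0 k a)
      _ = mr k := by rw [← Finset.sum_mul, hq1 k, one_mul]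
  have hEf : (∑ y : Cfg K n, p y * f y) = ∑ k, μ k := by
    calc ∑ y : Cfg K n, p y * f y
        = ∑ y : Cfg K n, ∑ k, (∏ j, q j (y j)) * g k (y k) := by
          apply Finset.sum_congr rfl
          intro y _
          rw [hpq y, hf y, Finset.mul_sum]
      _ = ∑ k, ∑ y : Cfg K n, (∏ j, q j (y j)) * g k (y k) := Finset.sum_comm
      _ = ∑ k, μ k := by
          apply Finset.sum_congr rfl
          intro k _
          exact sum_prod_pi_mul q hq1 k (g k)
  set G : (k : Fin K) → (Fin (Nat.choose (n k) 2) → Bool) → ℝ :=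
    fun k a => g k a - μ k with hGdef
  have hGabs : ∀ k a, |G k a| ≤ mr k := by
    intro k a
    rw [hGdef, abs_le]
    constructor
    · have := hg0 k a; have := hμle k; dsimp only; linarith
    · have := hgle k a; have := hμ0 k; dsimp only; linarith
  have hGzero : ∀ k, ∑ a, q k a * G k a = 0 := by
    intro k
    rw [hGdef]
    simp only [mul_sub]
    rw [Finset.sum_sub_distrib, ← Finset.sum_mul, hq1 k, one_mul, hμdef, sub_self]
  have hDx : ∀ x : Cfg K n, f x - (∑ y : Cfg K n, p y * f y) = ∑ k, G k (x k) := by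
    intro x
    rw [hf x, hEf, hGdef, ← Finset.sum_sub_distrib]
  have htot : ∑ x : Cfg K n, p x = 1 := by
    calc ∑ x : Cfg K n, p x = ∑ x : Cfg K n, ∏ k, q k (x k) :=
          Finset.sum_congr rfl fun x _ => hpq x
      _ = ∏ k, ∑ a, q k a := sum_prod_pi q
      _ = 1 := by
          rw [Finset.prod_congr rfl fun k _ => hq1 k, Finset.prod_const_one]
  -- scale parameters
  set t : ℝ := ε * Mr with htdef
  have ht0 : 0 < t := mul_pos hε hM0
  set E : ℝ := -(ε ^ 2 * (K : ℝ)) / (8 * c ^ 2 * Nr ^ 2) with hEdef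
  set S : ℝ := ∑ k, mr k ^ 2 with hSdef
  have hS0 : 0 < S :=
    Finset.sum_pos (fun k _ => pow_pos (hm0 k) 2) ⟨⟨0, hK⟩, Finset.mem_univ _⟩
  have hSub : S ≤ (K:ℝ) * (Nr ^ 2 / 2) ^ 2 := by
    rw [hSdef]
    calc ∑ k, mr k ^ 2 ≤ ∑ _k : Fin K, (Nr ^ 2 / 2) ^ 2 :=
          Finset.sum_le_sum fun k _ => pow_le_pow_left₀ (hm0 k).le (hmub k) 2
      _ = (K:ℝ) * (Nr ^ 2 / 2) ^ 2 := by
          rw [Finset.sum_const, Finset.card_univ, Fintype.card_fin, nsmul_eq_mul]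
  set b : ℝ := Nr ^ 2 / 2 with hbdef
  have hb0 : 0 < b := by rw [hbdef]; positivity
  set l : ℝ := min (t / (2 * S)) (1 / b) with hldef
  have hl0 : 0 < l := lt_min (by positivity) (by positivity)
  have hlm : ∀ k, l * mr k ≤ 1 := by
    intro k
    calc l * mr k ≤ (1 / b) * mr k :=
          mul_le_mul_of_nonneg_right (min_le_right _ _) (hm0 k).le
      _ ≤ (1 / b) * b := mul_le_mul_of_nonneg_left (hmub k) (by positivity)
      _ = 1 := by field_simp
  have hNc : 4 * c ^ 2 ≤ Nr ^ 2 := by nlinarith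
  -- the key tail bound
  have key : ∑ x ∈ Finset.univ.filter
        (fun x : Cfg K n => t ≤ |f x - ∑ y : Cfg K n, p y * f y|), p x
      ≤ 2 * Real.exp E := by
    by_cases hεle : ε ≤ 2 * Nr ^ 2
    · -- Chernoff regime
      have hexp : l ^ 2 * S - l * t ≤ E := by
        rcases min_cases (t / (2 * S)) (1 / b) with ⟨hmin, hcase⟩ | ⟨hmin, hcase⟩
        · rw [hldef, hmin]
          have hMsq : (K:ℝ) * (Nr ^ 2 / (4 * c ^ 2)) * ((K:ℝ) * (Nr ^ 2 / (4 * c ^ 2)))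
              ≤ Mr * Mr := mul_self_le_mul_self (by positivity) hMlb
          have hgoal : (t / (2 * S)) ^ 2 * S - (t / (2 * S)) * t = -(t ^ 2 / (4 * S)) := by
            field_simp
            ring
          rw [hgoal, hEdef, neg_div]
          apply neg_le_neg
          rw [div_le_div_iff₀ (by positivity) (by positivity), htdef]
          have hP2 : ((K:ℝ) * (Nr ^ 2 / (4 * c ^ 2))) ^ 2 ≤ Mr ^ 2 :=
            pow_le_pow_left₀ (by positivity) hMlb 2
          calc ε ^ 2 * (K:ℝ) * (4 * S)
              = 4 * ε ^ 2 * (K:ℝ) * S := by ring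
            _ ≤ 4 * ε ^ 2 * (K:ℝ) * ((K:ℝ) * (Nr ^ 2 / 2) ^ 2) :=
                mul_le_mul_of_nonneg_left hSub (by positivity)
            _ = ε ^ 2 * (K:ℝ) ^ 2 * Nr ^ 4 / (2 * c ^ 2) * (2 * c ^ 2) := by
                field_simp
                ring
            _ ≤ ε ^ 2 * (K:ℝ) ^ 2 * Nr ^ 4 / (2 * c ^ 2) * Nr ^ 2 := by
                apply mul_le_mul_of_nonneg_left _ (by positivity)
                nlinarith
            _ = ε ^ 2 * ((K:ℝ) * (Nr ^ 2 / (4 * c ^ 2))) ^ 2 * (8 * c ^ 2 * Nr ^ 2) := by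
                field_simp
                ring
            _ ≤ ε ^ 2 * Mr ^ 2 * (8 * c ^ 2 * Nr ^ 2) :=
                mul_le_mul_of_nonneg_right
                  (mul_le_mul_of_nonneg_left hP2 (sq_nonneg ε)) (by positivity)
            _ = (ε * Mr) ^ 2 * (8 * c ^ 2 * Nr ^ 2) := by ring
        · rw [hldef, hmin]
          have hSt : 2 * S ≤ t * b := by
            rw [div_lt_div_iff₀ hb0 (by positivity)] at hcase
            nlinarith
          have e1 : (1 / b) ^ 2 * S - (1 / b) * t = S / b ^ 2 - t / b := by
            field_simp
          have e2 : S / b ^ 2 ≤ t / (2 * b) := by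
            rw [div_le_div_iff₀ (by positivity) (by positivity)]
            nlinarith
          have e3 : t / b = 2 * (t / (2 * b)) := by field_simp
          have hval : (1 / b) ^ 2 * S - (1 / b) * t ≤ -(t / (2 * b)) := by
            rw [e1]
            linarith [e2, e3.ge]
          refine hval.trans ?_
          rw [hEdef, neg_div]
          apply neg_le_neg
          rw [div_le_div_iff₀ (by positivity) (by positivity), htdef, hbdef]
          calc ε ^ 2 * (K:ℝ) * (2 * (Nr ^ 2 / 2))
              = ε * (K:ℝ) * Nr ^ 2 * ε := by ring
            _ ≤ ε * (K:ℝ) * Nr ^ 2 * (2 * Nr ^ 2) :=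
                mul_le_mul_of_nonneg_left hεle (by positivity)
            _ = ε * ((K:ℝ) * (Nr ^ 2 / (4 * c ^ 2))) * (8 * c ^ 2 * Nr ^ 2) := by
                field_simp
                ring
            _ ≤ ε * Mr * (8 * c ^ 2 * Nr ^ 2) :=
                mul_le_mul_of_nonneg_right
                  (mul_le_mul_of_nonneg_left hMlb hε.le) (by positivity)
      have h2exp : Real.exp (l ^ 2 * S - l * t) ≤ Real.exp E := Real.exp_le_exp.mpr hexp
      set G' : (k : Fin K) → (Fin (Nat.choose (n k) 2) → Bool) → ℝ :=
        fun k a => -(G k a) with hG'def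
      have hG'abs : ∀ k a, |G' k a| ≤ mr k := by
        intro k a
        rw [hG'def]
        rw [abs_neg]
        exact hGabs k a
      have hG'zero : ∀ k, ∑ a, q k a * G' k a = 0 := by
        intro k
        rw [hG'def]
        simp only [mul_neg]
        rw [Finset.sum_neg_distrib, hGzero k, neg_zero]
      set s1 := Finset.univ.filter (fun x : Cfg K n => t ≤ ∑ k, G k (x k)) with hs1
      set s2 := Finset.univ.filter (fun x : Cfg K n => t ≤ ∑ k, G' k (x k)) with hs2
      have hsub : Finset.univ.filter
          (fun x : Cfg K n => t ≤ |f x - ∑ y : Cfg K n, p y * f y|) ⊆ s1 ∪ s2 := by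
        intro x hx
        rw [Finset.mem_filter] at hx
        have hx2 := hx.2
        rw [hDx x] at hx2
        rcases le_abs.mp hx2 with h | h
        · exact Finset.mem_union_left _ (Finset.mem_filter.mpr ⟨Finset.mem_univ _, h⟩)
        · apply Finset.mem_union_right
          apply Finset.mem_filter.mpr
          refine ⟨Finset.mem_univ _, ?_⟩
          rw [hG'def]
          rw [Finset.sum_neg_distrib]
          exact h
      have hu : ∑ x ∈ s1 ∪ s2, p x ≤ ∑ x ∈ s1, p x + ∑ x ∈ s2, p x := by
        have h1 := Finset.sum_union_inter (s₁ := s1) (s₂ := s2) (f := p)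
        have h0 : 0 ≤ ∑ x ∈ s1 ∩ s2, p x := Finset.sum_nonneg fun x _ => hp0 x
        linarith
      have hch1 : ∑ x ∈ s1, p x ≤ Real.exp (l ^ 2 * S - l * t) := by
        calc ∑ x ∈ s1, p x = ∑ x ∈ s1, ∏ j, q j (x j) :=
              Finset.sum_congr rfl fun x _ => hpq x
          _ ≤ Real.exp (l ^ 2 * S - l * t) :=
              chernoff q hq0 hq1 G mr (fun k => (hm0 k).le) hGabs hGzero t l hl0.le hlm
      have hch2 : ∑ x ∈ s2, p x ≤ Real.exp (l ^ 2 * S - l * t) := by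
        calc ∑ x ∈ s2, p x = ∑ x ∈ s2, ∏ j, q j (x j) :=
              Finset.sum_congr rfl fun x _ => hpq x
          _ ≤ Real.exp (l ^ 2 * S - l * t) :=
              chernoff q hq0 hq1 G' mr (fun k => (hm0 k).le) hG'abs hG'zero t l hl0.le hlm
      calc ∑ x ∈ Finset.univ.filter
            (fun x : Cfg K n => t ≤ |f x - ∑ y : Cfg K n, p y * f y|), p x
          ≤ ∑ x ∈ s1 ∪ s2, p x :=
            Finset.sum_le_sum_of_subset_of_nonneg hsub (fun x _ _ => hp0 x)
        _ ≤ ∑ x ∈ s1, p x + ∑ x ∈ s2, p x := hu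
        _ ≤ 2 * Real.exp (l ^ 2 * S - l * t) := by linarith
        _ ≤ 2 * Real.exp E := by linarith
    · push_neg at hεle
      have hempty : ∀ x : Cfg K n, ¬ (t ≤ |f x - ∑ y : Cfg K n, p y * f y|) := by
        intro x
        apply not_le.mpr
        have h1 : |f x - ∑ y : Cfg K n, p y * f y| ≤ Mr := by
          rw [hDx x]
          calc |∑ k, G k (x k)| ≤ ∑ k, |G k (x k)| := Finset.abs_sum_le_sum_abs _ _
            _ ≤ ∑ k, mr k := Finset.sum_le_sum fun k _ => hGabs k (x k)
        have h2 : Mr < t := by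
          rw [htdef]
          have hε1 : (1:ℝ) < ε := by nlinarith [hN2]
          nlinarith [mul_pos hM0 (sub_pos.mpr hε1)]
        exact lt_of_le_of_lt h1 h2
      rw [Finset.filter_false_of_mem (fun x _ => hempty x), Finset.sum_empty]
      positivity
  -- conclude
  constructor
  · haveI : Fintype {x : Cfg K n // t ≤ |f x - ∑ y : Cfg K n, p y * f y|} :=
      Fintype.ofFinite _
    rw [tsum_fintype]
    rw [← Finset.sum_subtype
      (Finset.univ.filter (fun x : Cfg K n => t ≤ |f x - ∑ y : Cfg K n, p y * f y|))
      (fun x => by simp) p]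
    exact key
  · haveI : Fintype {x : Cfg K n // |f x - ∑ y : Cfg K n, p y * f y| < t} :=
      Fintype.ofFinite _
    rw [tsum_fintype]
    rw [← Finset.sum_subtype
      (Finset.univ.filter (fun x : Cfg K n => |f x - ∑ y : Cfg K n, p y * f y| < t))
      (fun x => by simp) p]
    have hsplit := Finset.sum_filter_add_sum_filter_not Finset.univ
      (fun x : Cfg K n => t ≤ |f x - ∑ y : Cfg K n, p y * f y|) p
    have hfeq : Finset.univ.filter
          (fun x : Cfg K n => ¬ (t ≤ |f x - ∑ y : Cfg K n, p y * f y|))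
        = Finset.univ.filter
          (fun x : Cfg K n => |f x - ∑ y : Cfg K n, p y * f y| < t) := by
      apply Finset.filter_congr
      intro x _
      simp [not_le]
    rw [hfeq, htot] at hsplit
    linarith [key]
end

section
/- Let K ≥ 1 be the number of neighborhoods with sizes n_1,…,n_K ≥ 1, m_k = C(n_k,2), M = ∑_{k=1}^K m_k ≥ 1, N = max_k n_k, let X = ∏_{k=1}^K {0,1}^{m_k}, and let p be an exponential-family pmf with local dependence on X. Let b : X → ℝ^d be a statistic and a ∈ ℝ^d a fixed vector such that |⟨a, b(x) − b(y)⟩| ≤ A·d(x,y)·N for all x,y ∈ X, where A > 0 and d is the Hamming distance. Let E b(X) = ∑_x p(x)·b(x). Then for every ε > 0, the probability under p that |⟨a, b(X) − E b(X)⟩| ≥ ε·M is at most 2·exp(−ε²·M/(2·A²·N⁶)). -/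
open scoped BigOperators

/-- Hamming distance between two configurations: the number of edge coordinates
at which they differ. -/
def hamDist {K : ℕ} {n : Fin K → ℕ} (x y : Cfg K n) : ℕ :=
  ∑ k, (Finset.univ.filter (fun e => x k e ≠ y k e)).card

/-!
Under local dependence `p` is the product of the Gibbs distributions of the neighbourhoods, so
the neighbourhood configurations are independent. Resampling neighbourhood `k` changes at most
`m_k ≤ N²` edges and hence moves `⟨a, b⟩` by at most `c_k = A m_k N`. McDiarmid's inequality,
proved by integrating out one neighbourhood at a time and applying Hoeffding's lemma at each
step, bounds the tail at `t = ε M` by `2 exp (-t² / (2 ∑ c_k²))`, and `∑ c_k² ≤ A² N⁶ M`.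
-/

open Finset Real

section WeightedSums

variable {α : Type*} [Fintype α] {u : α → ℝ}

lemma sum_mul_sub_const (hu1 : ∑ v, u v = 1) (G : α → ℝ) (z : ℝ) :
    ∑ v, u v * (G v - z) = ∑ v, u v * G v - z := by
  simp only [mul_sub, sum_sub_distrib, ← sum_mul, hu1, one_mul]

lemma abs_sum_mul_le (hu : ∀ v, 0 ≤ u v) (hu1 : ∑ v, u v = 1) {G : α → ℝ} {c : ℝ}
    (hG : ∀ v, |G v| ≤ c) : |∑ v, u v * G v| ≤ c :=
  calc |∑ v, u v * G v| ≤ ∑ v, u v * |G v| := by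
        simpa only [abs_mul, abs_of_nonneg (hu _)] using abs_sum_le_sum_abs (fun v => u v * G v) univ
    _ ≤ ∑ v, u v * c := by gcongr with v; exacts [hu v, hG v]
    _ = c := by rw [← sum_mul, hu1, one_mul]

lemma abs_sub_sum_mul_le (hu : ∀ v, 0 ≤ u v) (hu1 : ∑ v, u v = 1) {G : α → ℝ} {z c : ℝ}
    (hG : ∀ v, |z - G v| ≤ c) : |z - ∑ v, u v * G v| ≤ c := by
  have := abs_sum_mul_le hu hu1 (G := fun v => G v - z) (c := c)
    (fun v => by rw [abs_sub_comm]; exact hG v)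
  rwa [sum_mul_sub_const hu1, abs_sub_comm] at this

end WeightedSums

lemma exp_mul_le_cosh_add_div_mul_sinh {z c : ℝ} (hz : |z| ≤ c) (t : ℝ) :
    exp (t * z) ≤ cosh (t * c) + z / c * sinh (t * c) := by
  rcases (abs_nonneg z).trans hz |>.eq_or_lt with rfl | hc
  · simp [abs_nonpos_iff.mp hz]
  · have hzc : |z / c| ≤ 1 := by rwa [abs_div, abs_of_pos hc, div_le_one hc]
    convert exp_mul_le_cosh_add_mul_sinh hzc (t * c) using 2
    field_simp

/-- Hoeffding's lemma for a finitely supported distribution. -/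
lemma sum_mul_exp_le_of_abs_le {α : Type*} [Fintype α] {u : α → ℝ} (hu : ∀ v, 0 ≤ u v)
    (hu1 : ∑ v, u v = 1) {Z : α → ℝ} (hZ0 : ∑ v, u v * Z v = 0) {c : ℝ}
    (hZ : ∀ v, |Z v| ≤ c) (t : ℝ) :
    ∑ v, u v * exp (t * Z v) ≤ exp (t ^ 2 * c ^ 2 / 2) :=
  calc ∑ v, u v * exp (t * Z v)
      ≤ ∑ v, u v * (cosh (t * c) + Z v / c * sinh (t * c)) := by
        gcongr with v
        · exact hu v
        · exact exp_mul_le_cosh_add_div_mul_sinh (hZ v) t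
    _ = cosh (t * c) * ∑ v, u v + sinh (t * c) / c * ∑ v, u v * Z v := by
        simp only [mul_sum, ← sum_add_distrib]
        exact sum_congr rfl fun v _ => by ring
    _ = cosh (t * c) := by rw [hu1, hZ0, mul_one, mul_zero, add_zero]
    _ ≤ exp (t ^ 2 * c ^ 2 / 2) := by rw [← mul_pow]; exact cosh_le_exp_half_sq _

lemma sum_filter_le_exp_mul_sum_mul_exp {α : Type*} [Fintype α] {W : α → ℝ}
    (hW : ∀ x, 0 ≤ W x) (g : α → ℝ) (t : ℝ) {l : ℝ} (hl : 0 ≤ l)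
    [DecidablePred fun x => t ≤ g x] :
    ∑ x ∈ univ.filter (fun x => t ≤ g x), W x ≤ exp (-(l * t)) * ∑ x, W x * exp (l * g x) :=
  calc ∑ x ∈ univ.filter (fun x => t ≤ g x), W x
      ≤ ∑ x ∈ univ.filter (fun x => t ≤ g x), W x * exp (l * (g x - t)) := by
        refine sum_le_sum fun x hx => le_mul_of_one_le_right (hW x) (one_le_exp ?_)
        exact mul_nonneg hl (sub_nonneg.mpr (mem_filter.mp hx).2)
    _ ≤ ∑ x, W x * exp (l * (g x - t)) :=
        sum_le_sum_of_subset_of_nonneg (filter_subset _ _)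
          fun x _ _ => mul_nonneg (hW x) (exp_nonneg _)
    _ = exp (-(l * t)) * ∑ x, W x * exp (l * g x) := by
        rw [mul_sum]
        refine sum_congr rfl fun x _ => ?_
        rw [mul_sub, sub_eq_add_neg, exp_add]
        ring

/-- One step of the martingale argument: integrating out the first factor of a product
distribution costs the Hoeffding factor of its bounded difference. -/
lemma sum_sum_mul_exp_le {α β : Type*} [Fintype α] [Fintype β] {u : α → ℝ}
    (hu : ∀ v, 0 ≤ u v) (hu1 : ∑ v, u v = 1) {W : β → ℝ} (hW : ∀ y, 0 ≤ W y)
    {F : α → β → ℝ} {c : ℝ} (hF : ∀ x x' y, |F x y - F x' y| ≤ c) (t e : ℝ) :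
    ∑ x, ∑ y, u x * W y * exp (t * (F x y - e))
      ≤ exp (t ^ 2 * c ^ 2 / 2) * ∑ y, W y * exp (t * (∑ x, u x * F x y - e)) := by
  rw [sum_comm, mul_sum]
  refine sum_le_sum fun y _ => ?_
  set g := ∑ x, u x * F x y
  have hoeffding : ∑ x, u x * exp (t * (F x y - g)) ≤ exp (t ^ 2 * c ^ 2 / 2) :=
    sum_mul_exp_le_of_abs_le hu hu1 (by rw [sum_mul_sub_const hu1, sub_self])
      (fun x => abs_sub_sum_mul_le hu hu1 fun x' => hF x x' y) t
  calc ∑ x, u x * W y * exp (t * (F x y - e))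
      = W y * exp (t * (g - e)) * ∑ x, u x * exp (t * (F x y - g)) := by
        rw [mul_sum]
        refine sum_congr rfl fun x _ => ?_
        rw [show t * (F x y - e) = t * (F x y - g) + t * (g - e) by ring, exp_add]
        ring
    _ ≤ W y * exp (t * (g - e)) * exp (t ^ 2 * c ^ 2 / 2) :=
        mul_le_mul_of_nonneg_left hoeffding (mul_nonneg (hW y) (exp_nonneg _))
    _ = _ := mul_comm _ _

lemma Fin.sum_univ_pi_succ {K : ℕ} {Ω : Fin (K + 1) → Type*} [∀ k, Fintype (Ω k)]
    (F : (∀ k, Ω k) → ℝ) :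
    ∑ x, F x = ∑ x₀, ∑ x' : ∀ i : Fin K, Ω i.succ, F (Fin.cons x₀ x') := by
  rw [← (Fin.consEquiv Ω).sum_comp, Fintype.sum_prod_type]
  rfl

lemma Fin.prod_univ_cons_apply {K : ℕ} {Ω : Fin (K + 1) → Type*} (w : ∀ k, Ω k → ℝ)
    (x₀ : Ω 0) (x' : ∀ i : Fin K, Ω i.succ) :
    ∏ k, w k (Fin.cons x₀ x' k) = w 0 x₀ * ∏ i, w i.succ (x' i) := by
  simp [Fin.prod_univ_succ]

section McDiarmid

variable {K : ℕ} {Ω : Fin K → Type*} [∀ k, Fintype (Ω k)] {w : ∀ k, Ω k → ℝ}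
  {f : (∀ k, Ω k) → ℝ} {c : Fin K → ℝ} {V : ℝ}

/-- McDiarmid's exponential-moment bound for a product of finite distributions. -/
theorem sum_prod_mul_exp_le_of_bounded_differences (hw : ∀ k v, 0 ≤ w k v)
    (hw1 : ∀ k, ∑ v, w k v = 1) (hf : ∀ x k v, |f (Function.update x k v) - f x| ≤ c k)
    (t : ℝ) :
    ∑ x, (∏ k, w k (x k)) * exp (t * (f x - ∑ y, (∏ k, w k (y k)) * f y))
      ≤ exp (t ^ 2 * (∑ k, c k ^ 2) / 2) := by
  induction K with
  | zero => simp
  | succ K ih =>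
    set g : (∀ i : Fin K, Ω i.succ) → ℝ := fun x' => ∑ x₀, w 0 x₀ * f (Fin.cons x₀ x')
    have hg : ∀ x' i v, |g (Function.update x' i v) - g x'| ≤ c i.succ := fun x' i v => by
      simp only [g, Fin.cons_update, ← sum_sub_distrib, ← mul_sub]
      exact abs_sum_mul_le (hw 0) (hw1 0) fun x₀ => hf _ _ _
    have hmean : ∑ y, (∏ k, w k (y k)) * f y = ∑ y, (∏ i, w i.succ (y i)) * g y := by
      rw [Fin.sum_univ_pi_succ, sum_comm]
      simp only [Fin.prod_univ_cons_apply, g, mul_sum]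
      exact sum_congr rfl fun _ _ => sum_congr rfl fun _ _ => by ring
    calc ∑ x, (∏ k, w k (x k)) * exp (t * (f x - ∑ y, (∏ k, w k (y k)) * f y))
        = ∑ x₀, ∑ x', w 0 x₀ * (∏ i, w i.succ (x' i)) *
            exp (t * (f (Fin.cons x₀ x') - ∑ y, (∏ k, w k (y k)) * f y)) := by
          simp only [Fin.sum_univ_pi_succ, Fin.prod_univ_cons_apply]
      _ ≤ exp (t ^ 2 * c 0 ^ 2 / 2) *
            ∑ x', (∏ i, w i.succ (x' i)) *
              exp (t * (g x' - ∑ y, (∏ i, w i.succ (y i)) * g y)) := by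
          rw [← hmean]
          refine sum_sum_mul_exp_le (hw 0) (hw1 0) (fun _ => prod_nonneg fun i _ => hw _ _)
            (fun x₀ x₀' x' => ?_) t _
          rw [← Fin.update_cons_zero x₀' x' x₀]
          exact hf _ 0 x₀
      _ ≤ exp (t ^ 2 * c 0 ^ 2 / 2) * exp (t ^ 2 * (∑ i : Fin K, c i.succ ^ 2) / 2) := by
          gcongr
          exact ih (fun i => hw i.succ) (fun i => hw1 i.succ) hg
      _ = exp (t ^ 2 * (∑ k, c k ^ 2) / 2) := by
          rw [← exp_add, Fin.sum_univ_succ]; ring_nf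

theorem sum_prod_filter_le_exp_of_bounded_differences (hw : ∀ k v, 0 ≤ w k v)
    (hw1 : ∀ k, ∑ v, w k v = 1) (hf : ∀ x k v, |f (Function.update x k v) - f x| ≤ c k)
    (hV : ∑ k, c k ^ 2 ≤ V) {t : ℝ} (ht : 0 ≤ t) :
    ∑ x ∈ univ.filter (fun x => t ≤ f x - ∑ y, (∏ k, w k (y k)) * f y), ∏ k, w k (x k)
      ≤ exp (-t ^ 2 / (2 * V)) := by
  have hV0 : 0 ≤ V := (sum_nonneg fun k _ => sq_nonneg (c k)).trans hV
  -- with `V = 0` the choice `l = t / V = 0` still works, since then `-t ^ 2 / (2 * V) = 0`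
  set l := t / V
  have hexponent : -(l * t) + l ^ 2 * V / 2 = -t ^ 2 / (2 * V) := by
    rcases hV0.eq_or_lt with rfl | hVpos
    · simp [l]
    · simp only [l]; field_simp; ring
  calc _ ≤ exp (-(l * t)) * exp (l ^ 2 * (∑ k, c k ^ 2) / 2) := by
        refine (sum_filter_le_exp_mul_sum_mul_exp (fun x => prod_nonneg fun k _ => hw k _) _ t
          (div_nonneg ht hV0)).trans ?_
        gcongr
        exact sum_prod_mul_exp_le_of_bounded_differences hw hw1 hf l
    _ ≤ exp (-(l * t)) * exp (l ^ 2 * V / 2) := by gcongr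
    _ = exp (-t ^ 2 / (2 * V)) := by rw [← exp_add, hexponent]

theorem sum_prod_filter_abs_le_two_mul_exp_of_bounded_differences (hw : ∀ k v, 0 ≤ w k v)
    (hw1 : ∀ k, ∑ v, w k v = 1) (hf : ∀ x k v, |f (Function.update x k v) - f x| ≤ c k)
    (hV : ∑ k, c k ^ 2 ≤ V) {t : ℝ} (ht : 0 ≤ t) :
    ∑ x ∈ univ.filter (fun x => t ≤ |f x - ∑ y, (∏ k, w k (y k)) * f y|), ∏ k, w k (x k)
      ≤ 2 * exp (-t ^ 2 / (2 * V)) := by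
  set E := ∑ y, (∏ k, w k (y k)) * f y
  have hneg : ∀ x, -f x - ∑ y, (∏ k, w k (y k)) * -f y = -(f x - E) := fun x => by
    simp only [mul_neg, sum_neg_distrib, E]; ring
  have upper := sum_prod_filter_le_exp_of_bounded_differences hw hw1 hf hV ht
  have lower := sum_prod_filter_le_exp_of_bounded_differences hw hw1 (f := fun x => -f x)
    (fun x k v => by rw [neg_sub_neg, abs_sub_comm]; exact hf x k v) hV ht
  simp only [hneg] at lower
  rw [two_mul]
  refine le_trans ?_ (add_le_add upper lower)
  simp only [sum_filter, ← sum_add_distrib]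
  refine sum_le_sum fun x _ => ?_
  have hW : 0 ≤ ∏ k, w k (x k) := prod_nonneg fun k _ => hw k _
  have hsplit := le_abs (a := t) (b := f x - E)
  split_ifs <;> grind

end McDiarmid

section Gibbs

noncomputable def gibbsWeight {α : Type*} [Fintype α] (φ : α → ℝ) (v : α) : ℝ :=
  exp (φ v) / ∑ u, exp (φ u)

variable {α : Type*} [Fintype α] (φ : α → ℝ)

lemma gibbsWeight_nonneg (v : α) : 0 ≤ gibbsWeight φ v :=
  div_nonneg (exp_nonneg _) (sum_nonneg fun _ _ => exp_nonneg _)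

lemma sum_gibbsWeight [Nonempty α] : ∑ v, gibbsWeight φ v = 1 := by
  simp only [gibbsWeight, ← sum_div]
  exact div_self (sum_pos (fun _ _ => exp_pos _) univ_nonempty).ne'

lemma gibbsWeight_sum_eq_prod {ι : Type*} [Fintype ι] [DecidableEq ι] {Ω : ι → Type*}
    [∀ k, Fintype (Ω k)] (φ : ∀ k, Ω k → ℝ) (x : ∀ k, Ω k) :
    gibbsWeight (fun y => ∑ k, φ k (y k)) x = ∏ k, gibbsWeight (φ k) (x k) := by
  simp only [gibbsWeight, exp_sum, prod_div_distrib, Fintype.prod_sum]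

end Gibbs

lemma sum_mul_sub_sum_mul {ι α : Type*} [Fintype ι] [Fintype α] (a : ι → ℝ)
    (b : α → ι → ℝ) (p : α → ℝ) (x : α) :
    ∑ i, a i * (b x i - ∑ y, p y * b y i)
      = ∑ i, a i * b x i - ∑ y, p y * ∑ i, a i * b y i := by
  simp only [mul_sub, sum_sub_distrib, mul_sum]
  rw [sum_comm]
  simp only [mul_left_comm]

lemma hamDist_update_le {K : ℕ} {n : Fin K → ℕ} (x : Cfg K n) (k : Fin K)
    (v : Fin (Nat.choose (n k) 2) → Bool) :
    hamDist (Function.update x k v) x ≤ Nat.choose (n k) 2 := by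
  rw [hamDist, sum_eq_single k (fun j _ hj => by simp [Function.update_of_ne hj])
    (fun hk => absurd (mem_univ k) hk)]
  exact (card_filter_le _ _).trans (by simp)

lemma sq_mul_choose_two_le {m N : ℕ} (hm : m ≤ N) (A : ℝ) :
    (A * (m.choose 2 : ℝ) * N) ^ 2 ≤ A ^ 2 * (N : ℝ) ^ 6 * (m.choose 2 : ℝ) := by
  have hchoose : m.choose 2 ≤ N ^ 2 := (Nat.choose_le_pow m 2).trans (Nat.pow_le_pow_left hm 2)
  have hpow : N ^ 4 ≤ N ^ 6 := by
    rcases N.eq_zero_or_pos with rfl | hN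
    · simp
    · exact Nat.pow_le_pow_right hN (by norm_num)
  have key : m.choose 2 ^ 2 * N ^ 2 ≤ N ^ 6 * m.choose 2 :=
    calc m.choose 2 ^ 2 * N ^ 2 = m.choose 2 * m.choose 2 * N ^ 2 := by ring
      _ ≤ m.choose 2 * N ^ 2 * N ^ 2 := by gcongr
      _ = N ^ 4 * m.choose 2 := by ring
      _ ≤ N ^ 6 * m.choose 2 := by gcongr
  calc (A * (m.choose 2 : ℝ) * N) ^ 2 = A ^ 2 * ((m.choose 2 ^ 2 * N ^ 2 : ℕ) : ℝ) := by
        push_cast; ring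
    _ ≤ A ^ 2 * ((N ^ 6 * m.choose 2 : ℕ) : ℝ) := by gcongr
    _ = A ^ 2 * (N : ℝ) ^ 6 * (m.choose 2 : ℝ) := by push_cast; ring

theorem statement2_general
    (K : ℕ)
    (n : Fin K → ℕ)
    (N : ℕ) (hNub : ∀ k, n k ≤ N)
    (dk : Fin K → ℕ)
    (η : (k : Fin K) → Fin (dk k) → ℝ)
    (s : (k : Fin K) → (Fin (Nat.choose (n k) 2) → Bool) → Fin (dk k) → ℝ)
    (Z : ℝ)
    (hZ : Z = ∑ x : Cfg K n, Real.exp (∑ k, ∑ i, η k i * s k (x k) i))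
    (p : Cfg K n → ℝ)
    (hp : ∀ x, p x = Real.exp (∑ k, ∑ i, η k i * s k (x k) i) / Z)
    (d : ℕ)
    (b : Cfg K n → Fin d → ℝ)
    (a : Fin d → ℝ)
    (A : ℝ) (hA : 0 < A)
    (hab : ∀ x y : Cfg K n,
      |∑ i, a i * (b x i - b y i)| ≤ A * (hamDist x y : ℝ) * (N : ℝ)) :
    ∀ ε : ℝ, 0 < ε →
      (∑' x : {x : Cfg K n //
          ε * (∑ k, ((Nat.choose (n k) 2 : ℝ))) ≤
            |∑ i, a i * (b x i - ∑ y : Cfg K n, p y * b y i)|}, p x.1) ≤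
        2 * Real.exp (-(ε ^ 2 * (∑ k, ((Nat.choose (n k) 2 : ℝ)))) /
          (2 * A ^ 2 * (N : ℝ) ^ 6)) := by
  intro ε hε
  set M := ∑ k, ((Nat.choose (n k) 2 : ℝ))
  have hpw : ∀ x, p x = ∏ k, gibbsWeight (fun u => ∑ i, η k i * s k u i) (x k) := fun x => by
    rw [hp, hZ]; exact gibbsWeight_sum_eq_prod (fun k u => ∑ i, η k i * s k u i) x
  set f : Cfg K n → ℝ := fun x => ∑ i, a i * b x i
  have hbd : ∀ x k v, |f (Function.update x k v) - f x| ≤ A * (Nat.choose (n k) 2 : ℝ) * N := by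
    intro x k v
    simp only [f, ← sum_sub_distrib, ← mul_sub]
    refine (hab _ _).trans ?_
    gcongr
    exact_mod_cast hamDist_update_le x k v
  have hV : ∑ k, (A * (Nat.choose (n k) 2 : ℝ) * N) ^ 2 ≤ A ^ 2 * (N : ℝ) ^ 6 * M := by
    rw [mul_sum]
    exact sum_le_sum fun k _ => sq_mul_choose_two_le (hNub k) A
  have hexponent : -(ε * M) ^ 2 / (2 * (A ^ 2 * (N : ℝ) ^ 6 * M))
      = -(ε ^ 2 * M) / (2 * A ^ 2 * (N : ℝ) ^ 6) := by
    rcases eq_or_ne M 0 with hM | hM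
    · simp [hM]
    · field_simp
  rw [tsum_fintype, ← sum_subtype _ (fun x => mem_filter_univ x) p,
    filter_congr (q := fun x => ε * M ≤ |f x - ∑ y, p y * f y|)
    fun x _ => by rw [sum_mul_sub_sum_mul]]
  simp only [hpw]
  rw [← hexponent]
  exact sum_prod_filter_abs_le_two_mul_exp_of_bounded_differences
    (fun _ => gibbsWeight_nonneg _) (fun _ => sum_gibbsWeight _) hbd hV
    (mul_nonneg hε.le (sum_nonneg fun k _ => Nat.cast_nonneg _))

/-- Lemma B.1 of the paper, with the unspecified constant made explicit:
concentration of the linear statistic `⟨a, b(X)⟩` under an exponential-family pmf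
with local dependence.  If `|⟨a, b(x) − b(y)⟩| ≤ A·d(x,y)·N` for the Hamming
distance `d`, then for every `ε > 0`,
`P(|⟨a, b(X) − E b(X)⟩| ≥ ε·M) ≤ 2·exp(−ε²·M/(2·A²·N⁶))`. -/
theorem statement2
    (K : ℕ) (hK : 1 ≤ K)
    (n : Fin K → ℕ) (hn : ∀ k, 1 ≤ n k)
    (hM : 1 ≤ ∑ k, Nat.choose (n k) 2)
    (N : ℕ) (hNub : ∀ k, n k ≤ N) (hNmem : ∃ k, n k = N)
    (dk : Fin K → ℕ)
    (η : (k : Fin K) → Fin (dk k) → ℝ)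
    (s : (k : Fin K) → (Fin (Nat.choose (n k) 2) → Bool) → Fin (dk k) → ℝ)
    (Z : ℝ)
    (hZ : Z = ∑ x : Cfg K n, Real.exp (∑ k, ∑ i, η k i * s k (x k) i))
    (p : Cfg K n → ℝ)
    (hp : ∀ x, p x = Real.exp (∑ k, ∑ i, η k i * s k (x k) i) / Z)
    (d : ℕ)
    (b : Cfg K n → Fin d → ℝ)
    (a : Fin d → ℝ)
    (A : ℝ) (hA : 0 < A)
    (hab : ∀ x y : Cfg K n,
      |∑ i, a i * (b x i - b y i)| ≤ A * (hamDist x y : ℝ) * (N : ℝ)) :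
    ∀ ε : ℝ, 0 < ε →
      (∑' x : {x : Cfg K n //
          ε * (∑ k, ((Nat.choose (n k) 2 : ℝ))) ≤
            |∑ i, a i * (b x i - ∑ y : Cfg K n, p y * b y i)|}, p x.1) ≤
        2 * Real.exp (-(ε ^ 2 * (∑ k, ((Nat.choose (n k) 2 : ℝ)))) /
          (2 * A ^ 2 * (N : ℝ) ^ 6)) :=
  statement2_general K n N hNub dk η s Z hZ p hp d b a A hA hab
end

section
/- Let V be a real inner product space, let v₁, v₂ ∈ V, and let A > 0 and B > 0 be real numbers. If ⟨A·v₂ − v₁, v₁ − B·v₂⟩ ≥ 0, then (1/2)·((A + B)/√(A·B))·|⟨v₁, v₂⟩| ≥ ‖v₁‖·‖v₂‖. -/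
open scoped RealInnerProductSpace

/-- Reverse Cauchy–Schwarz inequality (Dragomir; Lemma D.2 of the paper):
if `⟪A•v₂ - v₁, v₁ - B•v₂⟫ ≥ 0` with `A, B > 0`, then
`(1/2)·((A+B)/√(A·B))·|⟪v₁, v₂⟫| ≥ ‖v₁‖·‖v₂‖`. -/
theorem statement6 {V : Type*} [NormedAddCommGroup V] [InnerProductSpace ℝ V]
    (v₁ v₂ : V) (A B : ℝ) (hA : 0 < A) (hB : 0 < B)
    (h : 0 ≤ ⟪A • v₂ - v₁, v₁ - B • v₂⟫) :
    ‖v₁‖ * ‖v₂‖ ≤ (1 / 2) * ((A + B) / Real.sqrt (A * B)) * |⟪v₁, v₂⟫| := by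
  have hAB : 0 < A * B := mul_pos hA hB
  have hs : 0 < Real.sqrt (A * B) := Real.sqrt_pos.mpr hAB
  have hexp : ⟪A • v₂ - v₁, v₁ - B • v₂⟫
      = (A + B) * ⟪v₁, v₂⟫ - (A * B) * ‖v₂‖ ^ 2 - ‖v₁‖ ^ 2 := by
    simp [inner_sub_left, inner_sub_right, inner_smul_left, inner_smul_right,
      real_inner_self_eq_norm_sq, real_inner_comm v₂ v₁]
    ring
  have h1 : ‖v₁‖ ^ 2 + (A * B) * ‖v₂‖ ^ 2 ≤ (A + B) * |⟪v₁, v₂⟫| := by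
    have := h
    rw [hexp] at this
    nlinarith [le_abs_self (⟪v₁, v₂⟫ : ℝ), abs_nonneg (⟪v₁, v₂⟫ : ℝ),
      add_pos hA hB]
  have hamgm : 2 * Real.sqrt (A * B) * (‖v₁‖ * ‖v₂‖)
      ≤ ‖v₁‖ ^ 2 + (A * B) * ‖v₂‖ ^ 2 := by
    nlinarith [sq_nonneg (‖v₁‖ - Real.sqrt (A * B) * ‖v₂‖),
      Real.sq_sqrt hAB.le, hs]
  rw [show (1 / 2) * ((A + B) / Real.sqrt (A * B)) * |⟪v₁, v₂⟫|
      = ((A + B) * |⟪v₁, v₂⟫| / 2) / Real.sqrt (A * B) by ring, le_div_iff₀ hs]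
  nlinarith [hamgm, h1]
end

section
/- Let E be a nonempty finite set and let p be a probability mass function on {0,1}^E with p(x) > 0 for all x. For e ∈ E and x ∈ {0,1}^E let π_e(x) = p(x^{e,1})/(p(x^{e,1}) + p(x^{e,0})) be the conditional probability of edge e given the remaining coordinates. Let f : {0,1}^E → ℝ be nondecreasing with respect to the coordinatewise partial order (x ≤ y iff x_e ≤ y_e for all e). (i) If a ∈ [0,1] and π_e(x) ≥ a for all e and x, then the expectation of f under the product Bernoulli(a) measure on {0,1}^E is at most the expectation of f under p. (ii) If b ∈ [0,1] and π_e(x) ≤ b for all e and x, then the expectation of f under p is at most the expectation of f under the product Bernoulli(b) measure on {0,1}^E. -/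
/-!
Start from `p` and resample the edges one at a time, each independently from Bernoulli(`a`);
once every edge has been resampled the law is the product measure. Resampling edge `e` changes
the expectation of a monotone `g` by a sum over the pairs `{x^{e,0}, x^{e,1}}` of
`(g(x^{e,1}) - g(x^{e,0})) * (a p(x^{e,0}) - (1 - a) p(x^{e,1}))`, whose sign is fixed by the
bound on `π_e`. Resampling preserves monotonicity, so the comparisons chain.
-/

open Finset Function

section Resample

variable {E : Type*} [DecidableEq E]

def resample (a : ℝ) (e : E) (g : (E → Bool) → ℝ) (x : E → Bool) : ℝ :=
  a * g (update x e true) + (1 - a) * g (update x e false)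

theorem Monotone.resample {a : ℝ} (ha₀ : 0 ≤ a) (ha₁ : a ≤ 1) (e : E)
    {g : (E → Bool) → ℝ} (hg : Monotone g) : Monotone (resample a e g) := fun x y hxy =>
  have hupdate : ∀ c, update x e c ≤ update y e c :=
    fun _ => update_le_update_iff.2 ⟨le_rfl, fun j _ => hxy j⟩
  add_le_add (mul_le_mul_of_nonneg_left (hg (hupdate true)) ha₀)
    (mul_le_mul_of_nonneg_left (hg (hupdate false)) (sub_nonneg.2 ha₁))

variable [Fintype E]

/-- Keeps the coordinates of `x` off `S` and draws those in `S` independently from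
Bernoulli(`a`). -/
def resampleKernel (a : ℝ) (S : Finset E) (x z : E → Bool) : ℝ :=
  ∏ e, if e ∈ S then (if z e then a else 1 - a) else (if z e = x e then 1 else 0)

def resampleOn (a : ℝ) (S : Finset E) (g : (E → Bool) → ℝ) (x : E → Bool) : ℝ :=
  ∑ z, resampleKernel a S x z * g z

theorem resampleOn_empty (a : ℝ) (g : (E → Bool) → ℝ) : resampleOn a ∅ g = g := by
  funext x
  have hkernel : ∀ z, resampleKernel a ∅ x z = if z = x then 1 else 0 := fun z => by
    simp [resampleKernel, prod_boole, funext_iff]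
  simp [resampleOn, hkernel]

theorem resampleKernel_insert (a : ℝ) {S : Finset E} {e : E} (he : e ∉ S)
    (x z : E → Bool) :
    resampleKernel a (insert e S) x z =
      a * resampleKernel a S (update x e true) z +
        (1 - a) * resampleKernel a S (update x e false) z := by
  simp only [resampleKernel, ← mul_prod_erase univ _ (mem_univ e), mem_insert_self, if_true,
    he, if_false, update_self]
  have hrest : ∀ c, ∏ e' ∈ univ.erase e,
      (if e' ∈ S then (if z e' then a else 1 - a) else if z e' = update x e c e' then 1 else 0) =
      ∏ e' ∈ univ.erase e,
      (if e' ∈ insert e S then (if z e' then a else 1 - a)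
        else if z e' = x e' then 1 else 0) := by
    intro c
    refine prod_congr rfl fun e' he' => ?_
    have hne : e' ≠ e := ne_of_mem_erase he'
    simp only [update_of_ne hne, mem_insert, hne, false_or]
  rw [hrest, hrest]
  cases z e <;> simp

theorem resampleOn_insert (a : ℝ) {S : Finset E} {e : E} (he : e ∉ S)
    (g : (E → Bool) → ℝ) :
    resampleOn a (insert e S) g = resample a e (resampleOn a S g) := by
  funext x
  simp only [resampleOn, resample, resampleKernel_insert a he, add_mul, mul_assoc,
    sum_add_distrib, ← mul_sum]

theorem resampleOn_univ (a : ℝ) (g : (E → Bool) → ℝ) (x : E → Bool) :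
    resampleOn a univ g x = ∑ z, (∏ e, if z e then a else 1 - a) * g z := by
  simp only [resampleOn, resampleKernel, mem_univ, if_true]

theorem Monotone.resampleOn {a : ℝ} (ha₀ : 0 ≤ a) (ha₁ : a ≤ 1) (S : Finset E)
    {g : (E → Bool) → ℝ} (hg : Monotone g) : Monotone (resampleOn a S g) := by
  induction S using Finset.induction with
  | empty => rwa [resampleOn_empty]
  | insert e S he ih => rw [resampleOn_insert a he]; exact ih.resample ha₀ ha₁ e

theorem sum_update_true_add_update_false {M : Type*} [AddCommMonoid M] (φ : (E → Bool) → M)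
    (e : E) :
    ∑ x, (φ (update x e true) + φ (update x e false)) = 2 • ∑ x, φ x := by
  have hflip : Involutive fun x : E → Bool => update x e (!x e) := fun x => by simp
  calc ∑ x, (φ (update x e true) + φ (update x e false))
      = ∑ x, (φ x + φ (update x e (!x e))) := by
        refine sum_congr rfl fun x _ => ?_
        cases hx : x e
        · rw [add_comm, ← hx, update_eq_self]; simp [hx]
        · rw [← hx, update_eq_self]; simp [hx]
    _ = 2 • ∑ x, φ x := by
        rw [sum_add_distrib, Fintype.sum_bijective _ hflip.bijective _ φ fun _ => rfl, two_nsmul]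

theorem two_nsmul_sum_mul_sub_sum_mul_resample (p g : (E → Bool) → ℝ) (a : ℝ) (e : E) :
    2 • (∑ x, p x * g x - ∑ x, p x * resample a e g x) =
      ∑ x, (g (update x e true) - g (update x e false)) *
        ((1 - a) * p (update x e true) - a * p (update x e false)) := by
  rw [smul_sub, ← sum_update_true_add_update_false _ e,
    ← sum_update_true_add_update_false _ e, ← sum_sub_distrib]
  refine sum_congr rfl fun x _ => ?_
  simp only [resample, update_idem]
  ring

theorem sum_mul_resample_le {p g : (E → Bool) → ℝ} {a : ℝ} {e : E} (hg : Monotone g)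
    (hp : ∀ x, a * p (update x e false) ≤ (1 - a) * p (update x e true)) :
    ∑ x, p x * resample a e g x ≤ ∑ x, p x * g x := by
  have hpairs := two_nsmul_sum_mul_sub_sum_mul_resample p g a e
  have hnonneg : 0 ≤ ∑ x, (g (update x e true) - g (update x e false)) *
      ((1 - a) * p (update x e true) - a * p (update x e false)) :=
    sum_nonneg fun x _ => mul_nonneg
      (sub_nonneg.2 (hg (update_le_update_iff'.2 (Bool.false_le _)))) (sub_nonneg.2 (hp x))
  rw [two_nsmul] at hpairs
  linarith

theorem le_sum_mul_resample {p g : (E → Bool) → ℝ} {a : ℝ} {e : E} (hg : Monotone g)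
    (hp : ∀ x, (1 - a) * p (update x e true) ≤ a * p (update x e false)) :
    ∑ x, p x * g x ≤ ∑ x, p x * resample a e g x := by
  have hpairs := two_nsmul_sum_mul_sub_sum_mul_resample p g a e
  have hnonpos : ∑ x, (g (update x e true) - g (update x e false)) *
      ((1 - a) * p (update x e true) - a * p (update x e false)) ≤ 0 :=
    sum_nonpos fun x _ => mul_nonpos_of_nonneg_of_nonpos
      (sub_nonneg.2 (hg (update_le_update_iff'.2 (Bool.false_le _)))) (sub_nonpos.2 (hp x))
  rw [two_nsmul] at hpairs
  linarith

theorem sum_mul_resampleOn_rel {r : ℝ → ℝ → Prop} [Std.Refl r] [IsTrans ℝ r]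
    {p f : (E → Bool) → ℝ} {a : ℝ} (ha₀ : 0 ≤ a) (ha₁ : a ≤ 1)
    (hstep : ∀ e g, Monotone g → r (∑ x, p x * resample a e g x) (∑ x, p x * g x))
    (hf : Monotone f) (S : Finset E) :
    r (∑ x, p x * resampleOn a S f x) (∑ x, p x * f x) := by
  induction S using Finset.induction with
  | empty => rw [resampleOn_empty]; exact refl_of r _
  | insert e S he ih =>
    rw [resampleOn_insert a he]
    exact trans_of r (hstep e _ (hf.resampleOn ha₀ ha₁ S)) ih

end Resample

theorem mul_le_one_sub_mul_of_le_div_add {a u v : ℝ} (huv : 0 < u + v) (ha : a ≤ u / (u + v)) :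
    a * v ≤ (1 - a) * u := by
  rw [le_div_iff₀ huv] at ha
  linarith

theorem one_sub_mul_le_mul_of_div_add_le {b u v : ℝ} (huv : 0 < u + v) (hb : u / (u + v) ≤ b) :
    (1 - b) * u ≤ b * v := by
  rw [div_le_iff₀ huv] at hb
  linarith

theorem statement10_general {E : Type*} [Fintype E] [DecidableEq E]
    (p : (E → Bool) → ℝ) (hpos : ∀ x, 0 < p x) (hsum : ∑ x : E → Bool, p x = 1)
    (π : E → (E → Bool) → ℝ)
    (hπ : ∀ e x, π e x =
      p (Function.update x e true) /
        (p (Function.update x e true) + p (Function.update x e false)))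
    (f : (E → Bool) → ℝ) (hf : Monotone f) :
    (∀ a : ℝ, 0 ≤ a → a ≤ 1 → (∀ e x, a ≤ π e x) →
      (∑ x : E → Bool, (∏ e : E, (if x e then a else 1 - a)) * f x) ≤
        ∑ x : E → Bool, p x * f x) ∧
    (∀ b : ℝ, 0 ≤ b → b ≤ 1 → (∀ e x, π e x ≤ b) →
      (∑ x : E → Bool, p x * f x) ≤
        ∑ x : E → Bool, (∏ e : E, (if x e then b else 1 - b)) * f x) := by
  have hden : ∀ e x, 0 < p (update x e true) + p (update x e false) :=
    fun _ _ => add_pos (hpos _) (hpos _)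
  have hbernoulli : ∀ a, ∑ x, (∏ e, if x e then a else 1 - a) * f x =
      ∑ x, p x * resampleOn a univ f x := fun a => by
    simp only [resampleOn_univ, ← sum_mul, hsum, one_mul]
  refine ⟨fun a ha₀ ha₁ hπa => ?_, fun b hb₀ hb₁ hπb => ?_⟩
  · rw [hbernoulli]
    refine sum_mul_resampleOn_rel (r := (· ≤ ·)) ha₀ ha₁ (fun e g hg => ?_) hf univ
    exact sum_mul_resample_le hg fun x =>
      mul_le_one_sub_mul_of_le_div_add (hden e x) (hπ e x ▸ hπa e x)
  · rw [hbernoulli]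
    refine sum_mul_resampleOn_rel (r := (· ≥ ·)) hb₀ hb₁ (fun e g hg => ?_) hf univ
    exact le_sum_mul_resample hg fun x =>
      one_sub_mul_le_mul_of_div_add_le (hden e x) (hπ e x ▸ hπb e x)

/-- Stochastic domination part of Lemma D.5 of the paper (after Butts 2010):
for a full-support pmf `p` on `{0,1}^E` and a nondecreasing statistic `f`,
(i) if all conditional edge probabilities are `≥ a`, the expectation of `f` under the
product Bernoulli(`a`) measure is at most the expectation under `p`; (ii) if they are
`≤ b`, the expectation under `p` is at most that under product Bernoulli(`b`). -/
theorem statement10 {E : Type*} [Fintype E] [DecidableEq E] [Nonempty E]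
    (p : (E → Bool) → ℝ) (hpos : ∀ x, 0 < p x) (hsum : ∑ x : E → Bool, p x = 1)
    (π : E → (E → Bool) → ℝ)
    (hπ : ∀ e x, π e x =
      p (Function.update x e true) /
        (p (Function.update x e true) + p (Function.update x e false)))
    (f : (E → Bool) → ℝ) (hf : Monotone f) :
    (∀ a : ℝ, 0 ≤ a → a ≤ 1 → (∀ e x, a ≤ π e x) →
      (∑ x : E → Bool, (∏ e : E, (if x e then a else 1 - a)) * f x) ≤
        ∑ x : E → Bool, p x * f x) ∧
    (∀ b : ℝ, 0 ≤ b → b ≤ 1 → (∀ e x, π e x ≤ b) →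
      (∑ x : E → Bool, p x * f x) ≤
        ∑ x : E → Bool, (∏ e : E, (if x e then b else 1 - b)) * f x) :=
  statement10_general p hpos hsum π hπ f hf
end

section
/- Let n ≥ 3 and let E_n = {{i,j} : 1 ≤ i < j ≤ n} be the edge set of the complete graph on n vertices. Let p ∈ [0,1] and let the edge variables (X_{ij})_{{i,j}∈E_n} be independent Bernoulli(p) random variables (the product Bernoulli(p) measure on {0,1}^{E_n}). Define the transitive-edge count T(x) = ∑_{i<j} x_{ij} · max_{h ≠ i,j} (x_{ih}·x_{jh}), i.e., the number of pairs {i,j} with x_{ij} = 1 that have at least one common neighbor h. Then E[T(X)] = C(n,2) · p · (1 − (1 − p²)^{n−2}). -/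
open scoped BigOperators

/-- The edge set of the complete graph on `n` vertices, encoded as ordered pairs
`(i, j)` with `i < j`. -/
abbrev EdgeIdx (n : ℕ) : Type := {q : Fin n × Fin n // q.1 < q.2}

/-- A binary undirected graph configuration on `n` vertices. -/
abbrev GraphCfg (n : ℕ) : Type := EdgeIdx n → Bool

/-- Symmetric edge indicator `x_{ij}` of a configuration. -/
def edgeVal {n : ℕ} (x : GraphCfg n) (i j : Fin n) : Bool :=
  if h : i < j then x ⟨(i, j), h⟩ else if h : j < i then x ⟨(j, i), h⟩ else false

/-- The transitive-edge count
`T(x) = ∑_{i<j} x_{ij} · max_{h ≠ i,j} (x_{ih}·x_{jh})`: the number of edges `{i,j}`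
having at least one common neighbor. -/
def transEdges {n : ℕ} (x : GraphCfg n) : ℝ :=
  ∑ e : EdgeIdx n,
    if x e = true ∧ ∃ h : Fin n, h ≠ e.1.1 ∧ h ≠ e.1.2 ∧
        edgeVal x e.1.1 h = true ∧ edgeVal x e.1.2 h = true then (1 : ℝ) else 0

open Finset

lemma expprod {α : Type*} [Fintype α] [DecidableEq α] (w : α → Bool → ℝ)
    (hw : ∀ a, w a false + w a true = 1) (S : Finset α) (g : α → Bool → ℝ) :
    ∑ x : α → Bool, (∏ a, w a (x a)) * ∏ a ∈ S, g a (x a) =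
      ∏ a ∈ S, (w a false * g a false + w a true * g a true) := by
  have step : ∀ x : α → Bool, (∏ a, w a (x a)) * ∏ a ∈ S, g a (x a)
      = ∏ a, (w a (x a) * if a ∈ S then g a (x a) else 1) := by
    intro x
    rw [Finset.prod_mul_distrib]
    congr 1
    rw [← Finset.prod_filter, Finset.filter_mem_eq_inter, Finset.univ_inter]
  simp_rw [step]
  rw [← Fintype.prod_sum (fun a b => w a b * if a ∈ S then g a b else 1)]
  rw [← Finset.prod_filter_mul_prod_filter_not Finset.univ (· ∈ S)]
  have h2 : ∀ a ∈ Finset.univ.filter (¬ · ∈ S),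
      (∑ b : Bool, (w a b * if a ∈ S then g a b else 1)) = 1 := by
    intro a ha
    simp only [Finset.mem_filter] at ha
    simp [ha.2, Fintype.sum_bool]
    rw [add_comm]; exact hw a
  rw [Finset.prod_congr rfl h2, Finset.prod_const_one, mul_one]
  rw [Finset.filter_mem_eq_inter, Finset.univ_inter]
  refine Finset.prod_congr rfl fun a ha => ?_
  simp [ha, Fintype.sum_bool, add_comm]

def uedge {n : ℕ} (i j : Fin n) (hij : i ≠ j) : EdgeIdx n :=
  if h : i < j then ⟨(i, j), h⟩ else ⟨(j, i), lt_of_le_of_ne (not_lt.mp h) hij.symm⟩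

lemma edgeVal_uedge {n : ℕ} (x : GraphCfg n) (i j : Fin n) (hij : i ≠ j) :
    edgeVal x i j = x (uedge i j hij) := by
  unfold edgeVal uedge
  rcases lt_or_gt_of_ne hij with h | h
  · simp [h]
  · simp [h, not_lt.mpr h.le, hij]

def eset {n : ℕ} (a : EdgeIdx n) : Finset (Fin n) := {a.1.1, a.1.2}

lemma eset_uedge {n : ℕ} (i j : Fin n) (hij : i ≠ j) :
    eset (uedge i j hij) = {i, j} := by
  unfold uedge eset
  split_ifs <;> simp [Finset.pair_comm]

lemma card_edgeIdx (n : ℕ) : Fintype.card (EdgeIdx n) = n.choose 2 := by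
  have e : EdgeIdx n ≃ (Σ j : Fin n, Fin j.val) :=
    { toFun := fun q => ⟨q.1.2, ⟨q.1.1, q.2⟩⟩
      invFun := fun s => ⟨(⟨s.2, lt_trans s.2.isLt s.1.isLt⟩, s.1), s.2.isLt⟩
      left_inv := fun q => by rfl
      right_inv := fun s => by rfl }
  rw [Fintype.card_congr e, Fintype.card_sigma]
  simp only [Fintype.card_fin]
  rw [Fin.sum_univ_eq_sum_range (fun i => i) n, Finset.sum_range_id, Nat.choose_two_right]

noncomputable def B (b : Bool) : ℝ := if b then 1 else 0

lemma pointwise {n : ℕ} (x : GraphCfg n) (i j : Fin n) (hij : i < j) :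
    (if x ⟨(i,j),hij⟩ = true ∧ ∃ h : Fin n, h ≠ i ∧ h ≠ j ∧
        edgeVal x i h = true ∧ edgeVal x j h = true then (1:ℝ) else 0)
    = B (x ⟨(i,j),hij⟩) - B (x ⟨(i,j),hij⟩) *
        ∏ h ∈ Finset.univ \ {i, j}, (1 - B (edgeVal x i h) * B (edgeVal x j h)) := by
  cases hxe : x ⟨(i,j),hij⟩ with
  | false => simp [B, hxe]
  | true =>
    have hB : B true = 1 := rfl
    simp only [hxe, hB, true_and, one_mul]
    by_cases hex : ∃ h : Fin n, h ≠ i ∧ h ≠ j ∧ edgeVal x i h = true ∧ edgeVal x j h = true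
    · obtain ⟨h, h1, h2, h3, h4⟩ := hex
      have hmem : h ∈ Finset.univ \ ({i, j} : Finset (Fin n)) := by simp [h1, h2]
      have : ∏ h ∈ Finset.univ \ ({i,j} : Finset (Fin n)),
          (1 - B (edgeVal x i h) * B (edgeVal x j h)) = 0 :=
        Finset.prod_eq_zero hmem (by simp [B, h3, h4])
      rw [this, if_pos ⟨h, h1, h2, h3, h4⟩]
      ring
    · push_neg at hex
      have : ∏ h ∈ Finset.univ \ ({i,j} : Finset (Fin n)),
          (1 - B (edgeVal x i h) * B (edgeVal x j h)) = 1 := by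
        apply Finset.prod_eq_one
        intro h hmem
        simp only [Finset.mem_sdiff, Finset.mem_univ, Finset.mem_insert,
          Finset.mem_singleton, true_and, not_or] at hmem
        have := hex h hmem.1 hmem.2
        cases h3 : edgeVal x i h with
        | false => simp [B, h3]
        | true => simp [B, h3, this h3]
      have hne : ¬ ∃ h : Fin n, h ≠ i ∧ h ≠ j ∧
          edgeVal x i h = true ∧ edgeVal x j h = true := by push_neg; exact hex
      rw [this, if_neg hne]
      ring

lemma edge_exp {n : ℕ} (pr : ℝ) (i j : Fin n) (hij : i < j) :
    ∑ x : GraphCfg n, (∏ a : EdgeIdx n, (if x a then pr else 1 - pr)) *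
      (if x ⟨(i,j),hij⟩ = true ∧ ∃ h : Fin n, h ≠ i ∧ h ≠ j ∧
        edgeVal x i h = true ∧ edgeVal x j h = true then (1:ℝ) else 0)
    = pr * (1 - (1 - pr^2)^(n-2)) := by
  classical
  set w : EdgeIdx n → Bool → ℝ := fun _ b => if b then pr else 1 - pr with hwdef
  have hwsum : ∀ a, w a false + w a true = 1 := by intro a; simp [hwdef]
  set e : EdgeIdx n := ⟨(i,j),hij⟩ with hedef
  have hne : i ≠ j := Fin.ne_of_lt hij
  set H : Finset (Fin n) := Finset.univ \ {i,j} with hHdef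
  have hH : ∀ h ∈ H, h ≠ i ∧ h ≠ j := by
    intro h hh
    simp only [hHdef, Finset.mem_sdiff, Finset.mem_univ, Finset.mem_insert,
      Finset.mem_singleton, true_and, not_or] at hh
    exact hh
  have hHcard : H.card = n - 2 := by
    rw [hHdef, Finset.card_sdiff_of_subset (Finset.subset_univ _), Finset.card_univ, Fintype.card_fin,
      Finset.card_insert_of_notMem (by simp [hne]), Finset.card_singleton]
  set u : Fin n → EdgeIdx n := fun h => if hh : i = h then e else uedge i h hh with hudef
  set v : Fin n → EdgeIdx n := fun h => if hh : j = h then e else uedge j h hh with hvdef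
  have hu : ∀ h, h ≠ i → eset (u h) = {i, h} := by
    intro h hh
    simp only [hudef]
    rw [dif_neg (fun k => hh k.symm), eset_uedge]
  have hv : ∀ h, h ≠ j → eset (v h) = {j, h} := by
    intro h hh
    simp only [hvdef]
    rw [dif_neg (fun k => hh k.symm), eset_uedge]
  have hux : ∀ (x : GraphCfg n) (h : Fin n), h ≠ i → edgeVal x i h = x (u h) := by
    intro x h hh
    simp only [hudef]
    rw [dif_neg (fun k => hh k.symm)]
    exact edgeVal_uedge x i h _
  have hvx : ∀ (x : GraphCfg n) (h : Fin n), h ≠ j → edgeVal x j h = x (v h) := by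
    intro x h hh
    simp only [hvdef]
    rw [dif_neg (fun k => hh k.symm)]
    exact edgeVal_uedge x j h _
  have hesete : eset e = {i, j} := rfl
  -- rewrite pointwise and split
  have hpt : ∀ x : GraphCfg n, (∏ a : EdgeIdx n, (if x a then pr else 1 - pr)) *
      (if x e = true ∧ ∃ h : Fin n, h ≠ i ∧ h ≠ j ∧
        edgeVal x i h = true ∧ edgeVal x j h = true then (1:ℝ) else 0)
      = (∏ a, w a (x a)) * B (x e)
        - (∏ a, w a (x a)) * (B (x e) * ∏ h ∈ H, (1 - B (edgeVal x i h) * B (edgeVal x j h))) := by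
    intro x
    rw [pointwise x i j hij]
    ring
  rw [Finset.sum_congr rfl (fun x _ => hpt x), Finset.sum_sub_distrib]
  have t1 : ∑ x : GraphCfg n, (∏ a, w a (x a)) * B (x e) = pr := by
    have h := expprod w hwsum {e} (fun _ b => B b)
    simp only [Finset.prod_singleton] at h
    rw [h]
    simp [hwdef, B]
  rw [t1]
  have expand : ∀ x : GraphCfg n,
      B (x e) * ∏ h ∈ H, (1 - B (edgeVal x i h) * B (edgeVal x j h))
      = ∑ t ∈ H.powerset, B (x e) * ∏ h ∈ t, (-(B (edgeVal x i h) * B (edgeVal x j h))) := by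
    intro x
    have h1 : ∀ h ∈ H, (1 : ℝ) - B (edgeVal x i h) * B (edgeVal x j h)
        = (-(B (edgeVal x i h) * B (edgeVal x j h))) + 1 := by intro h _; ring
    rw [Finset.prod_congr rfl h1, Finset.prod_add, Finset.mul_sum]
    exact Finset.sum_congr rfl (fun t _ => by rw [Finset.prod_const_one, mul_one])
  have per_t : ∀ t ∈ H.powerset,
      ∑ x : GraphCfg n, (∏ a, w a (x a)) *
        (B (x e) * ∏ h ∈ t, (-(B (edgeVal x i h) * B (edgeVal x j h))))
      = pr * (-(pr^2))^t.card := by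
    intro t ht
    have hsub : t ⊆ H := Finset.mem_powerset.mp ht
    have hme : ∀ h ∈ t, h ≠ i ∧ h ≠ j := fun h hh => hH h (hsub hh)
    have hinj_u : ∀ a ∈ t, ∀ b ∈ t, u a = u b → a = b := by
      intro a ha b hb hab
      have h1 : ({i, a} : Finset (Fin n)) = {i, b} := by
        rw [← hu a (hme a ha).1, hab, hu b (hme b hb).1]
      have hmem : a ∈ ({i, b} : Finset (Fin n)) := by rw [← h1]; simp
      simp only [Finset.mem_insert, Finset.mem_singleton] at hmem
      rcases hmem with h | h
      · exact absurd h (hme a ha).1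
      · exact h
    have hinj_v : ∀ a ∈ t, ∀ b ∈ t, v a = v b → a = b := by
      intro a ha b hb hab
      have h1 : ({j, a} : Finset (Fin n)) = {j, b} := by
        rw [← hv a (hme a ha).2, hab, hv b (hme b hb).2]
      have hmem : a ∈ ({j, b} : Finset (Fin n)) := by rw [← h1]; simp
      simp only [Finset.mem_insert, Finset.mem_singleton] at hmem
      rcases hmem with h | h
      · exact absurd h (hme a ha).2
      · exact h
    have hdisj : Disjoint (t.image u) (t.image v) := by
      rw [Finset.disjoint_left]
      intro a hau hav
      obtain ⟨h1, hh1, rfl⟩ := Finset.mem_image.mp hau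
      obtain ⟨h2, hh2, heq⟩ := Finset.mem_image.mp hav
      have hs : ({j, h2} : Finset (Fin n)) = {i, h1} := by
        rw [← hv h2 (hme h2 hh2).2, heq, hu h1 (hme h1 hh1).1]
      have : j ∈ ({i, h1} : Finset (Fin n)) := by rw [← hs]; simp
      simp only [Finset.mem_insert, Finset.mem_singleton] at this
      rcases this with h | h
      · exact hne h.symm
      · exact (hme h1 hh1).2 h.symm
    have hem : e ∉ t.image u ∪ t.image v := by
      intro hmem
      rcases Finset.mem_union.mp hmem with hmem | hmem
      · obtain ⟨h1, hh1, heq⟩ := Finset.mem_image.mp hmem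
        have hs : ({i, h1} : Finset (Fin n)) = {i, j} := by
          rw [← hu h1 (hme h1 hh1).1, heq, hesete]
        have : j ∈ ({i, h1} : Finset (Fin n)) := by rw [hs]; simp
        simp only [Finset.mem_insert, Finset.mem_singleton] at this
        rcases this with h | h
        · exact hne h.symm
        · exact (hme h1 hh1).2 h.symm
      · obtain ⟨h1, hh1, heq⟩ := Finset.mem_image.mp hmem
        have hs : ({j, h1} : Finset (Fin n)) = {i, j} := by
          rw [← hv h1 (hme h1 hh1).2, heq, hesete]
        have : i ∈ ({j, h1} : Finset (Fin n)) := by rw [hs]; simp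
        simp only [Finset.mem_insert, Finset.mem_singleton] at this
        rcases this with h | h
        · exact hne h
        · exact (hme h1 hh1).1 h.symm
    set S : Finset (EdgeIdx n) := insert e (t.image u ∪ t.image v) with hSdef
    have hScard : S.card = 1 + 2 * t.card := by
      rw [hSdef, Finset.card_insert_of_notMem hem, Finset.card_union_of_disjoint hdisj,
        Finset.card_image_of_injOn hinj_u, Finset.card_image_of_injOn hinj_v]
      ring
    have hpt2 : ∀ x : GraphCfg n,
        (∏ a, w a (x a)) * (B (x e) * ∏ h ∈ t, (-(B (edgeVal x i h) * B (edgeVal x j h))))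
        = (-1 : ℝ)^t.card * ((∏ a, w a (x a)) * ∏ a ∈ S, B (x a)) := by
      intro x
      have hsgn : ∏ h ∈ t, (-(B (edgeVal x i h) * B (edgeVal x j h)))
          = (-1 : ℝ)^t.card * ∏ h ∈ t, (B (x (u h)) * B (x (v h))) := by
        have : ∀ h ∈ t, (-(B (edgeVal x i h) * B (edgeVal x j h)))
            = (-1 : ℝ) * (B (x (u h)) * B (x (v h))) := by
          intro h hh
          rw [hux x h (hme h hh).1, hvx x h (hme h hh).2]
          ring
        rw [Finset.prod_congr rfl this, Finset.prod_mul_distrib, Finset.prod_const]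
      have hprodS : ∏ a ∈ S, B (x a) = B (x e) * ∏ h ∈ t, (B (x (u h)) * B (x (v h))) := by
        rw [hSdef, Finset.prod_insert hem, Finset.prod_union hdisj,
          Finset.prod_image hinj_u, Finset.prod_image hinj_v, ← Finset.prod_mul_distrib]
      rw [hsgn, hprodS]
      ring
    rw [Finset.sum_congr rfl (fun x _ => hpt2 x), ← Finset.mul_sum,
      expprod w hwsum S (fun _ b => B b)]
    have : ∀ a ∈ S, w a false * B false + w a true * B true = pr := by
      intro a _; simp [hwdef, B]
    rw [Finset.prod_congr rfl this, Finset.prod_const, hScard, pow_add, pow_mul, pow_one, neg_pow]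
    ring
  have t2 : ∑ x : GraphCfg n, (∏ a, w a (x a)) *
      (B (x e) * ∏ h ∈ H, (1 - B (edgeVal x i h) * B (edgeVal x j h)))
      = pr * (1 - pr^2)^(n-2) := by
    have step1 : ∀ x : GraphCfg n, (∏ a, w a (x a)) *
        (B (x e) * ∏ h ∈ H, (1 - B (edgeVal x i h) * B (edgeVal x j h)))
        = ∑ t ∈ H.powerset, (∏ a, w a (x a)) *
            (B (x e) * ∏ h ∈ t, (-(B (edgeVal x i h) * B (edgeVal x j h)))) := by
      intro x
      rw [expand x, Finset.mul_sum]
    rw [Finset.sum_congr rfl (fun x _ => step1 x), Finset.sum_comm,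
      Finset.sum_congr rfl per_t, ← Finset.mul_sum]
    congr 1
    have h3 : ∀ t ∈ H.powerset, ((-(pr^2) : ℝ))^t.card
        = (∏ _h ∈ t, (-(pr^2))) * ∏ _h ∈ H \ t, (1:ℝ) := by
      intro t _; simp [Finset.prod_const]
    rw [Finset.sum_congr rfl h3, ← Finset.prod_add, Finset.prod_const, hHcard]
    congr 1
    ring
  rw [t2]
  ring


/-- Core computation in the proof of Lemma D.6 of the paper: under independent
Bernoulli(`p`) edges on the complete graph with `n ≥ 3` vertices, the expected
number of transitive edges is `C(n,2) · p · (1 − (1 − p²)^{n−2})`. -/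
theorem statement11 (n : ℕ) (hn : 3 ≤ n)
    (pr : ℝ) (h0 : 0 ≤ pr) (h1 : pr ≤ 1) :
    (∑ x : GraphCfg n, (∏ e : EdgeIdx n, (if x e then pr else 1 - pr)) * transEdges x) =
      (Nat.choose n 2 : ℝ) * pr * (1 - (1 - pr ^ 2) ^ (n - 2)) := by
  classical
  unfold transEdges
  simp_rw [Finset.mul_sum]
  rw [Finset.sum_comm]
  have key : ∀ e : EdgeIdx n,
      ∑ x : GraphCfg n, (∏ a : EdgeIdx n, (if x a then pr else 1 - pr)) *
        (if x e = true ∧ ∃ h : Fin n, h ≠ e.1.1 ∧ h ≠ e.1.2 ∧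
          edgeVal x e.1.1 h = true ∧ edgeVal x e.1.2 h = true then (1:ℝ) else 0)
      = pr * (1 - (1 - pr^2)^(n-2)) := by
    intro e
    obtain ⟨⟨i, j⟩, hij⟩ := e
    exact edge_exp pr i j hij
  rw [Finset.sum_congr rfl (fun e _ => key e), Finset.sum_const, Finset.card_univ,
    card_edgeIdx, nsmul_eq_mul, ← mul_assoc]
end

section
/- Let n ≥ 3, let E_n = {{i,j} : 1 ≤ i < j ≤ n}, and consider the exponential-family pmf on {0,1}^{E_n} given by p(x) = exp(θ₁·s₁(x) + θ₂·T(x))/Z, where s₁(x) = ∑_{i<j} x_{ij} is the edge count, T(x) = ∑_{i<j} x_{ij} · max_{h ≠ i,j} (x_{ih}·x_{jh}) is the transitive-edge count, θ₁ ∈ ℝ, θ₂ ≥ 0, and Z is the normalizing sum. For every edge e = {i,j} ∈ E_n and every x ∈ {0,1}^{E_n}, the conditional probability π_e(x) = p(x^{e,1})/(p(x^{e,1}) + p(x^{e,0})) of the edge e given the remaining edge variables satisfies 1/(1 + exp(−θ₁)) ≤ π_e(x) ≤ 1/(1 + exp(−θ₁ − θ₂·(2n − 3))). -/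
open scoped BigOperators

/-- The edge count `s₁(x) = ∑_{i<j} x_{ij}`. -/
def edgeCount {n : ℕ} (x : GraphCfg n) : ℝ :=
  ∑ e : EdgeIdx n, if x e then (1 : ℝ) else 0

/-!
Flipping the edge `e` from absent to present multiplies the unnormalized weight by
`exp (θ₁ + θ₂ Δ)`, where `Δ` is the change in the number of transitive edges, so the conditional
probability is `sigmoid (θ₁ + θ₂ Δ)`. Adding an edge cannot destroy a transitive edge, so `Δ ≥ 0`.
Whether an edge `f` is transitive only depends on the edges sharing an endpoint with `f`, so
flipping `e` only affects edges sharing an endpoint with `e`; there are `2n - 3` of them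
(`n - 1` at each endpoint, with `e` itself counted twice). Hence `0 ≤ Δ ≤ 2n - 3`, and the
bounds follow from the monotonicity of `sigmoid` since `θ₂ ≥ 0`.
-/

open Finset

section

variable {n : ℕ}

def incidentEdges (i : Fin n) : Finset (EdgeIdx n) := {f | f.1.1 = i ∨ f.1.2 = i}

lemma card_incidentEdges_lt (i : Fin n) : #(incidentEdges i) < n := by
  let otherEnd (f : EdgeIdx n) : Fin n := if f.1.1 = i then f.1.2 else f.1.1
  have hmaps : Set.MapsTo otherEnd (incidentEdges i) (univ.erase i) := by
    intro f _
    have := f.2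
    simp only [otherEnd, coe_erase, coe_univ]
    grind
  have hinj : Set.InjOn otherEnd (incidentEdges i) := by
    intro f hf g hg hfg
    have := f.2
    have := g.2
    simp only [incidentEdges, coe_filter, mem_univ, true_and, Set.mem_ofPred_eq] at hf hg
    simp only [otherEnd] at hfg
    apply Subtype.ext
    grind
  have := card_le_card_of_injOn otherEnd hmaps hinj
  rw [card_erase_of_mem (mem_univ i), card_univ, Fintype.card_fin] at this
  have := i.pos
  omega

lemma card_incidentEdges_union_add_three_le (e : EdgeIdx n) :
    #(incidentEdges e.1.1 ∪ incidentEdges e.1.2) + 3 ≤ 2 * n := by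
  have he : e ∈ incidentEdges e.1.1 ∩ incidentEdges e.1.2 := by simp [incidentEdges]
  have := card_union_add_card_inter (incidentEdges e.1.1) (incidentEdges e.1.2)
  have := card_pos.mpr ⟨e, he⟩
  have := card_incidentEdges_lt e.1.1
  have := card_incidentEdges_lt e.1.2
  omega

lemma edgeVal_mono {x y : GraphCfg n} (hxy : x ≤ y) (a h : Fin n) :
    edgeVal x a h ≤ edgeVal y a h := by
  unfold edgeVal
  split_ifs
  exacts [hxy _, hxy _, le_rfl]

lemma edgeVal_congr {x y : GraphCfg n} {a : Fin n} (hxy : ∀ g ∈ incidentEdges a, x g = y g)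
    (h : Fin n) : edgeVal x a h = edgeVal y a h := by
  unfold edgeVal
  split_ifs
  exacts [hxy _ (by simp [incidentEdges]), hxy _ (by simp [incidentEdges]), rfl]

def IsTransitiveEdge (x : GraphCfg n) (f : EdgeIdx n) : Prop :=
  x f = true ∧ ∃ h : Fin n, h ≠ f.1.1 ∧ h ≠ f.1.2 ∧
    edgeVal x f.1.1 h = true ∧ edgeVal x f.1.2 h = true

instance (x : GraphCfg n) : DecidablePred (IsTransitiveEdge x) :=
  fun _ => inferInstanceAs (Decidable (_ ∧ _))

lemma transEdges_eq_card (x : GraphCfg n) : transEdges x = #{f | IsTransitiveEdge x f} := by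
  rw [transEdges, sum_boole]
  rfl

lemma IsTransitiveEdge.mono {x y : GraphCfg n} (hxy : x ≤ y) {f : EdgeIdx n}
    (hf : IsTransitiveEdge x f) : IsTransitiveEdge y f := by
  obtain ⟨hxf, h, h₁, h₂, hv₁, hv₂⟩ := hf
  exact ⟨Bool.le_iff_imp.mp (hxy f) hxf, h, h₁, h₂,
    Bool.le_iff_imp.mp (edgeVal_mono hxy _ _) hv₁, Bool.le_iff_imp.mp (edgeVal_mono hxy _ _) hv₂⟩

lemma isTransitiveEdge_congr {x y : GraphCfg n} {f : EdgeIdx n}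
    (hxy : ∀ g ∈ incidentEdges f.1.1 ∪ incidentEdges f.1.2, x g = y g) :
    IsTransitiveEdge x f ↔ IsTransitiveEdge y f := by
  have h₁ := edgeVal_congr fun g hg => hxy g (mem_union_left _ hg)
  have h₂ := edgeVal_congr fun g hg => hxy g (mem_union_right _ hg)
  simp only [IsTransitiveEdge, hxy f (by simp [incidentEdges]), h₁, h₂]

lemma transEdges_mono : Monotone (transEdges (n := n)) := by
  intro x y hxy
  simp only [transEdges_eq_card]
  exact_mod_cast card_le_card (monotone_filter_right _ fun _ _ => IsTransitiveEdge.mono hxy)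

lemma transEdges_update_le (x : GraphCfg n) (e : EdgeIdx n) (v w : Bool) :
    transEdges (Function.update x e v) ≤
      transEdges (Function.update x e w) + #(incidentEdges e.1.1 ∪ incidentEdges e.1.2) := by
  simp only [transEdges_eq_card]
  norm_cast
  refine (card_le_card fun f hf => ?_).trans (card_union_le _ _)
  by_cases hfe : f ∈ incidentEdges e.1.1 ∪ incidentEdges e.1.2
  · exact mem_union_right _ hfe
  refine mem_union_left _ (mem_filter.mpr ⟨mem_univ f, ?_⟩)
  refine (isTransitiveEdge_congr fun g hg => ?_).mp (mem_filter.mp hf).2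
  obtain rfl | hge := eq_or_ne g e
  · simp only [incidentEdges, mem_union, mem_filter, mem_univ, true_and] at hg hfe
    grind
  · rw [Function.update_of_ne hge, Function.update_of_ne hge]

lemma edgeCount_update_true (x : GraphCfg n) (e : EdgeIdx n) :
    edgeCount (Function.update x e true) = edgeCount (Function.update x e false) + 1 := by
  have hrest : ∀ v : Bool, ∑ f ∈ {e}ᶜ, (if Function.update x e v f then (1 : ℝ) else 0) =
      ∑ f ∈ {e}ᶜ, if x f then (1 : ℝ) else 0 :=
    fun v => sum_congr rfl fun f hf => by rw [Function.update_of_ne (by simpa using hf)]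
  simp only [edgeCount, Fintype.sum_eq_add_sum_compl e, hrest, Function.update_self]
  norm_num
  ring

lemma exp_div_exp_add_exp (a b : ℝ) :
    Real.exp a / (Real.exp a + Real.exp b) = Real.sigmoid (a - b) := by
  rw [Real.sigmoid_def, neg_sub, Real.exp_sub]
  field_simp

end

theorem statement15_general (n : ℕ)
    (θ₁ θ₂ : ℝ) (hθ₂ : 0 ≤ θ₂)
    (Z : ℝ)
    (hZ : Z = ∑ x : GraphCfg n, Real.exp (θ₁ * edgeCount x + θ₂ * transEdges x))
    (p : GraphCfg n → ℝ)
    (hp : ∀ x, p x = Real.exp (θ₁ * edgeCount x + θ₂ * transEdges x) / Z)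
    (π : EdgeIdx n → GraphCfg n → ℝ)
    (hπ : ∀ e x, π e x =
      p (Function.update x e true) /
        (p (Function.update x e true) + p (Function.update x e false))) :
    ∀ (e : EdgeIdx n) (x : GraphCfg n),
      1 / (1 + Real.exp (-θ₁)) ≤ π e x ∧
      π e x ≤ 1 / (1 + Real.exp (-θ₁ - θ₂ * (2 * (n : ℝ) - 3))) := by
  intro e x
  set x₁ := Function.update x e true
  set x₀ := Function.update x e false
  set Δ := transEdges x₁ - transEdges x₀
  have hZ₀ : Z ≠ 0 := hZ ▸ (sum_pos (fun _ _ => Real.exp_pos _) univ_nonempty).ne'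
  have hπσ : π e x = Real.sigmoid (θ₁ + θ₂ * Δ) := by
    rw [hπ, hp, hp, ← add_div, div_div_div_cancel_right₀ hZ₀, exp_div_exp_add_exp,
      edgeCount_update_true]
    congr 1
    ring
  have hΔ₀ : 0 ≤ Δ := sub_nonneg.mpr (transEdges_mono (Function.update_mono (Bool.false_le true)))
  have hΔ₁ : Δ ≤ 2 * n - 3 := by
    have := transEdges_update_le x e true false
    have : (#(incidentEdges e.1.1 ∪ incidentEdges e.1.2) : ℝ) + 3 ≤ 2 * n := by
      exact_mod_cast card_incidentEdges_union_add_three_le e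
    linarith
  have hσ (t : ℝ) : 1 / (1 + Real.exp (-t)) = Real.sigmoid t := one_div _
  rw [sub_eq_add_neg, ← neg_add, hσ, hσ, hπσ]
  exact ⟨Real.sigmoid_le (le_add_of_nonneg_right (mul_nonneg hθ₂ hΔ₀)), Real.sigmoid_le (by gcongr)⟩

/-- Bounds `α(θ) ≤ π_e(x) ≤ β(θ)` on conditional edge probabilities of the
exponential family generated by the numbers of edges and transitive edges with
`θ₂ ≥ 0` (used in the proof of Lemma D.8 of the paper):
`1/(1 + exp(−θ₁)) ≤ π_e(x) ≤ 1/(1 + exp(−θ₁ − θ₂·(2n − 3)))`. -/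
theorem statement15 (n : ℕ) (hn : 3 ≤ n)
    (θ₁ θ₂ : ℝ) (hθ₂ : 0 ≤ θ₂)
    (Z : ℝ)
    (hZ : Z = ∑ x : GraphCfg n, Real.exp (θ₁ * edgeCount x + θ₂ * transEdges x))
    (p : GraphCfg n → ℝ)
    (hp : ∀ x, p x = Real.exp (θ₁ * edgeCount x + θ₂ * transEdges x) / Z)
    (π : EdgeIdx n → GraphCfg n → ℝ)
    (hπ : ∀ e x, π e x =
      p (Function.update x e true) /
        (p (Function.update x e true) + p (Function.update x e false))) :
    ∀ (e : EdgeIdx n) (x : GraphCfg n),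
      1 / (1 + Real.exp (-θ₁)) ≤ π e x ∧
      π e x ≤ 1 / (1 + Real.exp (-θ₁ - θ₂ * (2 * (n : ℝ) - 3))) :=
  statement15_general n θ₁ θ₂ hθ₂ Z hZ p hp π hπ
end
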